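/- arXiv:2104.13784 — 4 statements merged into one kernel-verified Lean document; each statement's English description precedes it below -/
import Mathlib

section
/- For every integer K ≥ 1, the Flaschka–Newell bracket on ℂ^{2K+2} × ℂ* satisfies the Jacobi identity: for all coordinate functions x_a, x_b, x_c taken among s_1, …, s_{2K+2}, λ, one has {x_a, {x_b, x_c}_{FN}}_{FN} + {x_b, {x_c, x_a}_{FN}}_{FN} + {x_c, {x_a, x_b}_{FN}}_{FN} = 0 identically on ℂ^{2K+2} × ℂ*. -/
noncomputable section

open Matrix Finset

/-- Partial derivative with respect to the Stokes coordinate `s_j`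
(0-based index `j`, corresponding to the paper's `s_{j+1}`) of a function
of `(s, λ) ∈ ℂ^{2K+2} × ℂ`. -/
def pS (K : ℕ) (j : Fin (2*K+2)) (f : (Fin (2*K+2) → ℂ) → ℂ → ℂ)
    (s : Fin (2*K+2) → ℂ) (lam : ℂ) : ℂ :=
  fderiv ℂ (fun t => f t lam) s (Pi.single j 1)

/-- Partial derivative with respect to `λ`. -/
def pL (K : ℕ) (f : (Fin (2*K+2) → ℂ) → ℂ → ℂ)
    (s : Fin (2*K+2) → ℂ) (lam : ℂ) : ℂ :=
  deriv (f s) lam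

/-- The structure constant `{s_{j+1}, s_{l+1}}_{FN}` (0-based indices `j < l`):
`δ_{j+1,l} − δ_{j,0} δ_{l,2K+1} λ^{−2} + (−1)^{j+l+1} s_j s_l`
(which is the paper's `δ_{j,l−1} − δ_{j,1}δ_{l,2K+2} λ^{−2} + (−1)^{j−l+1} s_j s_l`
in 1-based indexing). -/
def cSS (K : ℕ) (j l : Fin (2*K+2)) (s : Fin (2*K+2) → ℂ) (lam : ℂ) : ℂ :=
  (if (j:ℕ)+1 = (l:ℕ) then 1 else 0)
  - (if (j:ℕ) = 0 ∧ (l:ℕ) = 2*K+1 then (lam^2)⁻¹ else 0)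
  + (-1:ℂ)^((j:ℕ)+(l:ℕ)+1) * s j * s l

/-- The structure constant `{s_{j+1}, λ}_{FN} = (−1)^{j+1} s_{j+1} λ` (0-based `j`). -/
def cSL (K : ℕ) (j : Fin (2*K+2)) (s : Fin (2*K+2) → ℂ) (lam : ℂ) : ℂ :=
  (-1:ℂ)^((j:ℕ)+1) * s j * lam

/-- The Flaschka–Newell bracket of two functions of `(s, λ)`:
`{f,g} = Σ_{j<l} {s_j,s_l}·(∂_j f ∂_l g − ∂_l f ∂_j g) + Σ_j {s_j,λ}·(∂_j f ∂_λ g − ∂_λ f ∂_j g)`. -/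
def fnBr (K : ℕ) (f g : (Fin (2*K+2) → ℂ) → ℂ → ℂ)
    (s : Fin (2*K+2) → ℂ) (lam : ℂ) : ℂ :=
  (∑ j : Fin (2*K+2), ∑ l : Fin (2*K+2),
    if (j:ℕ) < (l:ℕ) then
      cSS K j l s lam *
        (pS K j f s lam * pS K l g s lam - pS K l f s lam * pS K j g s lam)
    else 0)
  + ∑ j : Fin (2*K+2),
      cSL K j s lam * (pS K j f s lam * pL K g s lam - pL K f s lam * pS K j g s lam)

/-- Upper-triangular unipotent 2×2 matrix `[[1, a], [0, 1]]`. -/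
def Umat (a : ℂ) : Matrix (Fin 2) (Fin 2) ℂ := !![1, a; 0, 1]

/-- Lower-triangular unipotent 2×2 matrix `[[1, 0], [a, 1]]`. -/
def Lmat (a : ℂ) : Matrix (Fin 2) (Fin 2) ℂ := !![1, 0; a, 1]

/-- The Pauli matrix `σ3`. -/
def sigma3 : Matrix (Fin 2) (Fin 2) ℂ := !![1, 0; 0, -1]

/-- The matrix `σ₊`. -/
def sigmaP : Matrix (Fin 2) (Fin 2) ℂ := !![0, 1; 0, 0]

/-- The matrix `σ₋`. -/
def sigmaM : Matrix (Fin 2) (Fin 2) ℂ := !![0, 0; 1, 0]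

/-- The matrix `F = F_K(s, λ) = [[1,s_1],[0,1]]·[[1,0],[s_2,1]] ⋯
[[1,s_{2K+1}],[0,1]]·[[1,0],[s_{2K+2},1]]·diag(λ, λ⁻¹)`
(here `s` is 0-based: `s i` is the paper's `s_{i+1}`). -/
def Fmat (K : ℕ) (s : Fin (2*K+2) → ℂ) (lam : ℂ) : Matrix (Fin 2) (Fin 2) ℂ :=
  ((List.ofFn fun i : Fin (K+1) =>
      Umat (s ⟨2*(i:ℕ), by have := i.isLt; omega⟩) *
      Lmat (s ⟨2*(i:ℕ)+1, by have := i.isLt; omega⟩)).prod)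
    * !![lam, 0; 0, lam⁻¹]

/-- The coordinate functions `s_1, …, s_{2K+2}, λ` on `ℂ^{2K+2} × ℂ*`
(index `i < 2K+2` gives `s_{i+1}`, the last index gives `λ`). -/
def coordFn (K : ℕ) (i : Fin (2*K+3)) : (Fin (2*K+2) → ℂ) → ℂ → ℂ :=
  if h : (i:ℕ) < 2*K+2 then fun t _ => t ⟨(i:ℕ), h⟩ else fun _ lam => lam

/-!
Put `x_{2K+2} := λ`. The bracket of two coordinates is `{x_a, x_b} = P_ab(λ) + q_ab x_a x_b`,
with a constant part `P` (the Kronecker deltas and the `λ⁻²` term) and a log-canonical part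
`q_ab = ±(-1)^(a+b+1)`, and `{x_a, g} = ∑_b {x_a, x_b} ∂_b g`; so the Jacobiator of three
coordinates is an explicit expression. Its cubic part cancels by antisymmetry of `q` alone. Its
mixed part cancels edge by edge: a unit edge `(i, i+1)` of `P` joins indices of opposite parity
with nothing in between, so `q_ik + q_(i+1)k = 0`; for the exceptional edge `(0, 2K+1)` the sum is
`2 q_k(2K+2)` instead, and that is exactly cancelled by the `λ`-derivative of `λ⁻²`.
-/

def fnAdj (K i j : ℕ) : ℂ :=
  (if i + 1 = j ∧ j < 2*K+2 then 1 else 0) - (if j + 1 = i ∧ i < 2*K+2 then 1 else 0)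

def fnExc (K i j : ℕ) : ℂ :=
  (if i = 0 ∧ j = 2*K+1 then 1 else 0) - (if j = 0 ∧ i = 2*K+1 then 1 else 0)

def fnSign (i j : ℕ) : ℂ :=
  ((if i < j then 1 else 0) - (if j < i then 1 else 0)) * (-1) ^ (i + j + 1)

/-- `{x_a, x_b}_FN`, i.e. `P_ab + q_ab x_a x_b` with `P_ab = fnAdj - fnExc λ⁻²` and
`q_ab = fnSign`. -/
def fnMat (K : ℕ) (a b : Fin (2*K+3)) (s : Fin (2*K+2) → ℂ) (lam : ℂ) : ℂ :=
  fnAdj K a b - fnExc K a b * (lam^2)⁻¹ + fnSign a b * coordFn K a s lam * coordFn K b s lam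

def pX (K : ℕ) (e : Fin (2*K+3)) (f : (Fin (2*K+2) → ℂ) → ℂ → ℂ)
    (s : Fin (2*K+2) → ℂ) (lam : ℂ) : ℂ :=
  if h : (e:ℕ) < 2*K+2 then pS K ⟨e, h⟩ f s lam else pL K f s lam

def coordFnFDeriv (K : ℕ) (a : Fin (2*K+3)) : (Fin (2*K+2) → ℂ) →L[ℂ] ℂ :=
  if h : (a:ℕ) < 2*K+2 then ContinuousLinearMap.proj (⟨a, h⟩ : Fin (2*K+2)) else 0

section

variable {K : ℕ}

lemma fnSign_add_fnSign_succ {i k : ℕ} (hk : k ≠ i) (hk' : k ≠ i + 1) :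
    fnSign i k + fnSign (i + 1) k = 0 := by
  unfold fnSign
  rcases lt_or_gt_of_ne hk with h | h
  · have h' : k < i + 1 := by omega
    simp only [if_neg h.not_gt, if_pos h, if_neg h'.not_gt, if_pos h']
    ring
  · have h' : i + 1 < k := by omega
    simp only [if_pos h, if_neg h.not_gt, if_pos h', if_neg h'.not_gt]
    ring

lemma fnSign_zero_add_fnSign_two_mul_add_one {k : ℕ} (hk0 : k ≠ 0) (hkM : k ≠ 2*K+1)
    (hkL : k ≤ 2*K+2) : fnSign 0 k + fnSign (2*K+1) k = 2 * fnSign k (2*K+2) := by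
  unfold fnSign
  rcases lt_or_eq_of_le hkL with h | rfl
  · have hM : k < 2*K+1 := by omega
    simp only [if_pos (Nat.pos_of_ne_zero hk0), if_neg (Nat.not_lt_zero k), if_pos hM,
      if_neg hM.not_gt, if_pos h, if_neg h.not_gt, pow_add, pow_mul, neg_one_sq, one_pow]
    ring
  · simp [pow_add, pow_mul]

lemma fnAdj_mul_fnSign_add_fnSign {i j k : ℕ} (hi : k ≠ i) (hj : k ≠ j) :
    fnAdj K i j * (fnSign i k + fnSign j k) = 0 := by
  unfold fnAdj
  split_ifs with h1 h2 h2
  · omega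
  · rw [← h1.1, fnSign_add_fnSign_succ hi (h1.1 ▸ hj)]; ring
  · rw [← h2.1, add_comm, fnSign_add_fnSign_succ hj (h2.1 ▸ hi)]; ring
  · ring

lemma fnExc_mul_fnSign_add_fnSign_sub {i j k : ℕ} (hi : k ≠ i) (hj : k ≠ j)
    (hk : k ≤ 2*K+2) : fnExc K i j * (fnSign i k + fnSign j k - 2 * fnSign k (2*K+2)) = 0 := by
  unfold fnExc
  split_ifs with h1 h2 h2
  · omega
  · rw [h1.1, h1.2, fnSign_zero_add_fnSign_two_mul_add_one (h1.1 ▸ hi) (h1.2 ▸ hj) hk]; ring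
  · rw [h2.1, h2.2, add_comm,
      fnSign_zero_add_fnSign_two_mul_add_one (h2.1 ▸ hj) (h2.2 ▸ hi) hk]
    ring
  · ring

@[simp] lemma coordFn_castSucc (j : Fin (2*K+2)) (s : Fin (2*K+2) → ℂ) (lam : ℂ) :
    coordFn K j.castSucc s lam = s j := by
  simp [coordFn]

@[simp] lemma coordFn_last (s : Fin (2*K+2) → ℂ) (lam : ℂ) :
    coordFn K (Fin.last (2*K+2)) s lam = lam := by
  simp [coordFn]

@[simp] lemma pX_castSucc (j : Fin (2*K+2)) (f : (Fin (2*K+2) → ℂ) → ℂ → ℂ)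
    (s : Fin (2*K+2) → ℂ) (lam : ℂ) : pX K j.castSucc f s lam = pS K j f s lam := by
  simp [pX]

@[simp] lemma pX_last (f : (Fin (2*K+2) → ℂ) → ℂ → ℂ) (s : Fin (2*K+2) → ℂ)
    (lam : ℂ) : pX K (Fin.last (2*K+2)) f s lam = pL K f s lam := by
  simp [pX]

lemma fnMat_castSucc_castSucc {j l : Fin (2*K+2)} (h : j < l) (s : Fin (2*K+2) → ℂ)
    (lam : ℂ) : fnMat K j.castSucc l.castSucc s lam = cSS K j l s lam := by
  have h' : (j:ℕ) < l := h
  simp only [fnMat, cSS, fnAdj, fnExc, fnSign, coordFn_castSucc, Fin.val_castSucc,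
    if_pos h', if_neg h'.not_gt]
  split_ifs <;> first | omega | ring

lemma fnMat_castSucc_last (j : Fin (2*K+2)) (s : Fin (2*K+2) → ℂ) (lam : ℂ) :
    fnMat K j.castSucc (Fin.last (2*K+2)) s lam = cSL K j s lam := by
  have hj := j.isLt
  simp only [fnMat, cSL, fnAdj, fnExc, fnSign, coordFn_castSucc, coordFn_last,
    Fin.val_castSucc, Fin.val_last, if_pos hj, if_neg hj.not_gt]
  split_ifs <;> first | omega | tauto | (simp only [pow_add, pow_mul]; norm_num)

lemma fnBr_eq_sum (f g : (Fin (2*K+2) → ℂ) → ℂ → ℂ) (s : Fin (2*K+2) → ℂ)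
    (lam : ℂ) :
    fnBr K f g s lam = ∑ a, ∑ b, if a < b then fnMat K a b s lam *
      (pX K a f s lam * pX K b g s lam - pX K b f s lam * pX K a g s lam) else 0 := by
  simp only [Fin.sum_univ_castSucc (n := 2*K+2), Fin.castSucc_lt_castSucc_iff, Fin.castSucc_lt_last,
    if_true, lt_irrefl, if_false, not_lt_of_gt (Fin.castSucc_lt_last _), pX_castSucc, pX_last,
    fnMat_castSucc_last, Finset.sum_const_zero, add_zero, fnBr]
  rw [← Finset.sum_add_distrib]
  refine Finset.sum_congr rfl fun j _ => congrArg (· + _) (Finset.sum_congr rfl fun l _ => ?_)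
  by_cases h : j < l
  · rw [if_pos h, if_pos (Fin.lt_def.mp h), fnMat_castSucc_castSucc h]
  · rw [if_neg h, if_neg (mt Fin.lt_def.mpr h)]

lemma coordFnFDeriv_single (a : Fin (2*K+3)) (j : Fin (2*K+2)) :
    coordFnFDeriv K a (Pi.single j 1) = if j.castSucc = a then 1 else 0 := by
  by_cases h : (a:ℕ) < 2*K+2
  · have : j.castSucc = a ↔ j = ⟨a, h⟩ := by simp [Fin.ext_iff]
    simp [coordFnFDeriv, h, this, Pi.single_apply, eq_comm]
  · have : j.castSucc ≠ a := fun e => h (e ▸ j.isLt)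
    simp [coordFnFDeriv, h, this]

lemma hasFDerivAt_coordFn (a : Fin (2*K+3)) (s : Fin (2*K+2) → ℂ) (lam : ℂ) :
    HasFDerivAt (fun t => coordFn K a t lam) (coordFnFDeriv K a) s := by
  by_cases h : (a:ℕ) < 2*K+2
  · simpa [coordFn, coordFnFDeriv, h] using
      hasFDerivAt_apply (𝕜 := ℂ) (⟨a, h⟩ : Fin (2*K+2)) s
  · simpa [coordFn, coordFnFDeriv, h] using hasFDerivAt_const (𝕜 := ℂ) lam s

lemma hasDerivAt_coordFn (a : Fin (2*K+3)) (s : Fin (2*K+2) → ℂ) (lam : ℂ) :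
    HasDerivAt (coordFn K a s) (if Fin.last (2*K+2) = a then 1 else 0) lam := by
  by_cases h : (a:ℕ) < 2*K+2
  · have : Fin.last (2*K+2) ≠ a := fun e => by simp [← e] at h
    simpa [coordFn, h, this] using hasDerivAt_const lam (s ⟨a, h⟩)
  · have : Fin.last (2*K+2) = a := Fin.ext (by simp; omega)
    simpa [coordFn, h, this] using hasDerivAt_id' lam

lemma pX_coordFn (e a : Fin (2*K+3)) (s : Fin (2*K+2) → ℂ) (lam : ℂ) :
    pX K e (coordFn K a) s lam = if e = a then 1 else 0 := by
  induction e using Fin.lastCases with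
  | last => rw [pX_last, pL, (hasDerivAt_coordFn a s lam).deriv]
  | cast j => rw [pX_castSucc, pS, (hasFDerivAt_coordFn a s lam).fderiv, coordFnFDeriv_single]

lemma fnMat_swap (a b : Fin (2*K+3)) (s : Fin (2*K+2) → ℂ) (lam : ℂ) :
    fnMat K b a s lam = -fnMat K a b s lam := by
  simp only [fnMat, fnAdj, fnExc, fnSign]
  ring

lemma fnMat_self (a : Fin (2*K+3)) (s : Fin (2*K+2) → ℂ) (lam : ℂ) :
    fnMat K a a s lam = 0 := by
  simp only [fnMat, fnAdj, fnExc, fnSign]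
  ring

lemma fnBr_coordFn_left (a : Fin (2*K+3)) (g : (Fin (2*K+2) → ℂ) → ℂ → ℂ)
    (s : Fin (2*K+2) → ℂ) (lam : ℂ) :
    fnBr K (coordFn K a) g s lam = ∑ b, fnMat K a b s lam * pX K b g s lam := by
  have hsplit : ∀ e b : Fin (2*K+3), (if e < b then fnMat K e b s lam *
      ((if e = a then 1 else 0) * pX K b g s lam - (if b = a then 1 else 0) * pX K e g s lam)
      else 0) = (if e = a then (if a < b then fnMat K a b s lam * pX K b g s lam else 0) else 0)
        - (if b = a then (if e < a then fnMat K e a s lam * pX K e g s lam else 0) else 0) := by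
    intro e b
    split_ifs <;> subst_vars <;> first | order | ring
  simp only [fnBr_eq_sum, pX_coordFn, hsplit, Finset.sum_sub_distrib, Finset.sum_ite_eq',
    Finset.mem_univ, if_true]
  rw [Finset.sum_comm, Finset.sum_congr rfl fun e _ => Finset.sum_ite_eq' _ _ _]
  simp only [Finset.mem_univ, if_true, ← Finset.sum_sub_distrib]
  refine Finset.sum_congr rfl fun b _ => ?_
  rcases lt_trichotomy a b with h | rfl | h
  · simp [h, h.not_gt]
  · simp [fnMat_self]
  · simp [h, h.not_gt, fnMat_swap b a]

lemma fnBr_coordFn_coordFn (a b : Fin (2*K+3)) :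
    fnBr K (coordFn K a) (coordFn K b) = fnMat K a b := by
  ext s lam
  simp [fnBr_coordFn_left, pX_coordFn]

lemma pX_fnMat (d b c : Fin (2*K+3)) (s : Fin (2*K+2) → ℂ) {lam : ℂ} (hlam : lam ≠ 0) :
    pX K d (fnMat K b c) s lam =
      (if d = Fin.last (2*K+2) then 2 * fnExc K b c * (lam^3)⁻¹ else 0)
      + fnSign b c * ((if d = b then 1 else 0) * coordFn K c s lam
        + coordFn K b s lam * (if d = c then 1 else 0)) := by
  induction d using Fin.lastCases with
  | last =>
    have hinv : HasDerivAt (fun l : ℂ => (l^2)⁻¹) (-2 * (lam^3)⁻¹) lam := by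
      refine ((hasDerivAt_pow 2 lam).inv (pow_ne_zero 2 hlam)).congr_deriv ?_
      field_simp
      ring
    have h : HasDerivAt (fnMat K b c s) _ lam :=
      ((hasDerivAt_const lam (fnAdj K b c)).sub (hinv.const_mul (fnExc K b c))).add
        (((hasDerivAt_coordFn b s lam).const_mul (fnSign b c)).mul (hasDerivAt_coordFn c s lam))
    rw [pX_last, pL, h.deriv]
    simp only [if_true, eq_comm (a := Fin.last (2*K+2))]
    ring
  | cast j =>
    have h : HasFDerivAt (fun t => fnMat K b c t lam) _ s :=
      (((hasFDerivAt_coordFn b s lam).const_mul (fnSign b c)).mul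
        (hasFDerivAt_coordFn c s lam)).const_add (fnAdj K b c - fnExc K b c * (lam^2)⁻¹)
    rw [pX_castSucc, pS, h.fderiv]
    simp only [_root_.add_apply, _root_.smul_apply, smul_eq_mul,
      coordFnFDeriv_single, Fin.castSucc_ne_last, if_false]
    ring

lemma fnMat_last (a : Fin (2*K+3)) (s : Fin (2*K+2) → ℂ) (lam : ℂ) :
    fnMat K a (Fin.last (2*K+2)) s lam = fnSign a (2*K+2) * coordFn K a s lam * lam := by
  have ha : (a:ℕ) ≤ 2*K+2 := Nat.lt_succ_iff.mp a.isLt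
  simp only [fnMat, fnAdj, fnExc, Fin.val_last, coordFn_last]
  split_ifs <;> first | omega | tauto | ring

lemma fnBr_coordFn_fnMat (a b c : Fin (2*K+3)) (s : Fin (2*K+2) → ℂ) {lam : ℂ}
    (hlam : lam ≠ 0) :
    fnBr K (coordFn K a) (fnMat K b c) s lam =
      2 * fnSign a (2*K+2) * fnExc K b c * coordFn K a s lam * (lam^2)⁻¹
      + fnSign b c * (fnMat K a b s lam * coordFn K c s lam
        + coordFn K b s lam * fnMat K a c s lam) := by
  simp only [fnBr_coordFn_left, pX_fnMat _ _ _ _ hlam, mul_add, mul_ite, ite_mul, mul_one,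
    mul_zero, zero_mul, Finset.sum_add_distrib, Finset.sum_ite_eq', Finset.mem_univ, if_true,
    fnMat_last]
  field_simp

lemma fnBr_coordFn_fnMat_cyclic (a b c : Fin (2*K+3)) (s : Fin (2*K+2) → ℂ) {lam : ℂ}
    (hlam : lam ≠ 0) :
    fnBr K (coordFn K a) (fnMat K b c) s lam + fnBr K (coordFn K b) (fnMat K c a) s lam
      + fnBr K (coordFn K c) (fnMat K a b) s lam = 0 := by
  simp only [fnBr_coordFn_fnMat _ _ _ _ hlam]
  rcases eq_or_ne a b with rfl | hab
  · simp only [fnMat, fnAdj, fnExc, fnSign]; ring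
  rcases eq_or_ne b c with rfl | hbc
  · simp only [fnMat, fnAdj, fnExc, fnSign]; ring
  rcases eq_or_ne c a with rfl | hca
  · simp only [fnMat, fnAdj, fnExc, fnSign]; ring
  replace hab := Fin.val_ne_of_ne hab
  replace hbc := Fin.val_ne_of_ne hbc
  replace hca := Fin.val_ne_of_ne hca
  have ha := Nat.lt_succ_iff.mp a.isLt
  have hb := Nat.lt_succ_iff.mp b.isLt
  have hc := Nat.lt_succ_iff.mp c.isLt
  have adj_ab := fnAdj_mul_fnSign_add_fnSign (K := K) hca hbc.symm
  have adj_bc := fnAdj_mul_fnSign_add_fnSign (K := K) hab hca.symm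
  have adj_ca := fnAdj_mul_fnSign_add_fnSign (K := K) hbc hab.symm
  have exc_ab := fnExc_mul_fnSign_add_fnSign_sub hca hbc.symm hc
  have exc_bc := fnExc_mul_fnSign_add_fnSign_sub hab hca.symm ha
  have exc_ca := fnExc_mul_fnSign_add_fnSign_sub hbc hab.symm hb
  -- unfolded, the antisymmetry of `fnAdj`, `fnExc` and `fnSign` is visible to `ring`
  simp only [fnMat, fnAdj, fnExc, fnSign] at *
  linear_combination coordFn K c s lam * (adj_ab - (lam^2)⁻¹ * exc_ab)
    + coordFn K a s lam * (adj_bc - (lam^2)⁻¹ * exc_bc)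
    + coordFn K b s lam * (adj_ca - (lam^2)⁻¹ * exc_ca)

end

theorem flaschka_newell_jacobi_general (K : ℕ) (a b c : Fin (2*K+3))
    (s : Fin (2*K+2) → ℂ) (lam : ℂ) (hlam : lam ≠ 0) :
    fnBr K (coordFn K a) (fnBr K (coordFn K b) (coordFn K c)) s lam
    + fnBr K (coordFn K b) (fnBr K (coordFn K c) (coordFn K a)) s lam
    + fnBr K (coordFn K c) (fnBr K (coordFn K a) (coordFn K b)) s lam = 0 := by
  simp only [fnBr_coordFn_coordFn]
  exact fnBr_coordFn_fnMat_cyclic a b c s hlam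

/-- the Flaschka–Newell bracket satisfies the Jacobi identity on all
coordinate functions `x_a, x_b, x_c` taken among `s_1, …, s_{2K+2}, λ`,
identically on `ℂ^{2K+2} × ℂ*`. -/
theorem flaschka_newell_jacobi (K : ℕ) (hK : 1 ≤ K) (a b c : Fin (2*K+3))
    (s : Fin (2*K+2) → ℂ) (lam : ℂ) (hlam : lam ≠ 0) :
    fnBr K (coordFn K a) (fnBr K (coordFn K b) (coordFn K c)) s lam
    + fnBr K (coordFn K b) (fnBr K (coordFn K c) (coordFn K a)) s lam
    + fnBr K (coordFn K c) (fnBr K (coordFn K a) (coordFn K b)) s lam = 0 :=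
  flaschka_newell_jacobi_general K a b c s lam hlam
end
end

section
/- For every integer K ≥ 1, the Flaschka–Newell bracket of s_1 with the matrix F = F_K satisfies, entrywise, {s_1, F}_{FN} = (s_1/2)[σ3, F] + [σ−, F], where [X, Y] = XY − YX denotes the commutator. -/
noncomputable section

open Matrix Finset

namespace FN

abbrev Mat2 := Matrix (Fin 2) (Fin 2) ℂ

def EM (m : ℕ) : Mat2 := if m % 2 = 0 then sigmaP else sigmaM
def GM (t : ℕ → ℂ) (m : ℕ) : Mat2 := if m % 2 = 0 then Umat (t m) else Lmat (t m)

def AM (t : ℕ → ℂ) : ℕ → Mat2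
  | 0 => 1
  | m+1 => AM t m * GM t m

def CM (t : ℕ → ℂ) : ℕ → ℕ → Mat2
  | _, 0 => 1
  | a, k+1 => GM t a * CM t (a+1) k

lemma GM_eq (t : ℕ → ℂ) (m : ℕ) : GM t m = 1 + t m • EM m := by
  by_cases h : m % 2 = 0 <;>
    · ext i j
      fin_cases i <;> fin_cases j <;>
        simp [GM, EM, h, Umat, Lmat, sigmaP, sigmaM, Matrix.one_apply]

lemma M1 (t : ℕ → ℂ) (m : ℕ) :
    GM t m * sigma3 = sigma3 * GM t m + (2 * (-1:ℂ)^(m+1) * t m) • EM m := by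
  by_cases h : m % 2 = 0
  · have hpow : (-1:ℂ)^(m+1) = -1 := Odd.neg_one_pow ⟨m/2, by omega⟩
    ext i j
    fin_cases i <;> fin_cases j <;>
      simp [GM, EM, h, hpow, Umat, Lmat, sigma3, sigmaP, sigmaM,
        Matrix.mul_apply, Fin.sum_univ_two] <;> ring
  · have hpow : (-1:ℂ)^(m+1) = 1 := Even.neg_one_pow ⟨(m+1)/2, by omega⟩
    ext i j
    fin_cases i <;> fin_cases j <;>
      simp [GM, EM, h, hpow, Umat, Lmat, sigma3, sigmaP, sigmaM,
        Matrix.mul_apply, Fin.sum_univ_two] <;> ring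

lemma M2u (a : ℂ) :
    Umat a * sigmaM = (sigmaM + a • sigma3 - (a^2) • sigmaP) * Umat a := by
  ext i j
  fin_cases i <;> fin_cases j <;>
    simp [Umat, sigma3, sigmaP, sigmaM, Matrix.mul_apply, Fin.sum_univ_two] <;> ring

lemma M3 (a : ℂ) : sigmaM * Lmat a = sigmaM := by
  ext i j
  fin_cases i <;> fin_cases j <;>
    simp [Lmat, sigmaM, Matrix.mul_apply, Fin.sum_univ_two]

lemma M4 (a : ℂ) : Lmat a * sigmaM = sigmaM := by
  ext i j
  fin_cases i <;> fin_cases j <;>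
    simp [Lmat, sigmaM, Matrix.mul_apply, Fin.sum_univ_two]

lemma M5 (a : ℂ) : sigmaP * Umat a = sigmaP := by
  ext i j
  fin_cases i <;> fin_cases j <;>
    simp [Umat, sigmaP, Matrix.mul_apply, Fin.sum_univ_two]

lemma M6 (lam : ℂ) (hlam : lam ≠ 0) :
    sigmaM * !![lam, 0; 0, lam⁻¹] = (lam^2) • (!![lam, 0; 0, lam⁻¹] * sigmaM) := by
  ext i j
  fin_cases i <;> fin_cases j <;>
    simp [sigmaM, Matrix.mul_apply, Fin.sum_univ_two] <;>
    field_simp <;> ring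

lemma M7 (lam : ℂ) :
    sigma3 * !![lam, 0; 0, lam⁻¹] = !![lam, 0; 0, lam⁻¹] * sigma3 := by
  ext i j
  fin_cases i <;> fin_cases j <;>
    simp [sigma3, Matrix.mul_apply, Fin.sum_univ_two]

lemma M8 (lam : ℂ) (hlam : lam ≠ 0) :
    lam • (!![1, 0; 0, -(lam^2)⁻¹] : Mat2) = !![lam, 0; 0, lam⁻¹] * sigma3 := by
  ext i j
  fin_cases i <;> fin_cases j <;>
    simp [sigma3, Matrix.mul_apply, Fin.sum_univ_two] <;>
    field_simp <;> ring

lemma S2' (t : ℕ → ℂ) : ∀ (k a : ℕ), CM t a k * GM t (a+k) = CM t a (k+1)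
  | 0, a => by simp [CM]
  | k+1, a => by
    show (GM t a * CM t (a+1) k) * GM t (a+(k+1)) = GM t a * CM t (a+1) (k+1)
    rw [mul_assoc, show a + (k+1) = (a+1) + k by omega, S2' t k (a+1)]

lemma S3 (t : ℕ → ℂ) : ∀ (k l : ℕ), AM t l * CM t l k = AM t (l+k)
  | 0, l => by simp [CM]
  | k+1, l => by
    have := S3 t k (l+1)
    simp only [CM]
    rw [← mul_assoc, show AM t l * GM t l = AM t (l+1) from rfl, this,
      show l + 1 + k = l + (k+1) by omega]

lemma S6 (t : ℕ → ℂ) (m : ℕ) : CM t 0 m = AM t m := by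
  have := S3 t m 0
  simpa [AM] using this

lemma AM_congr (t t' : ℕ → ℂ) : ∀ m, (∀ i, i < m → t i = t' i) → AM t m = AM t' m
  | 0, _ => rfl
  | m+1, h => by
    have h1 : AM t m = AM t' m := AM_congr t t' m (fun i hi => h i (by omega))
    have h2 : GM t m = GM t' m := by rw [GM_eq, GM_eq, h m (by omega)]
    simp [AM, h1, h2]

lemma AFF (t : ℕ → ℂ) (l : ℕ) (ε : ℂ) :
    ∀ m, l < m →
      AM (Function.update t l (t l + ε)) m
        = AM t m + ε • (AM t l * EM l * CM t (l+1) (m-1-l))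
  | 0, h => by omega
  | m+1, h => by
    set t' := Function.update t l (t l + ε) with ht'
    rcases Nat.lt_or_ge l m with hlm | hlm
    · have ih := AFF t l ε m hlm
      have hGM : GM t' m = GM t m := by
        rw [GM_eq, GM_eq, ht', Function.update_of_ne (by omega) _ t]
      have hstep : CM t (l+1) (m-1-l) * GM t m = CM t (l+1) (m+1-1-l) := by
        have h1 := S2' t (m-1-l) (l+1)
        rw [show (l+1) + (m-1-l) = m by omega] at h1
        rw [h1, show m - 1 - l + 1 = m + 1 - 1 - l by omega]
      show AM t' m * GM t' m = _
      rw [hGM, ih, add_mul, smul_mul_assoc, mul_assoc, mul_assoc, hstep, ← mul_assoc]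
      rfl
    · have hlm' : l = m := by omega
      subst hlm'
      have h1 : AM t' l = AM t l :=
        AM_congr _ _ l (fun i hi => Function.update_of_ne (by omega) _ t)
      have h2 : GM t' l = GM t l + ε • EM l := by
        rw [GM_eq, GM_eq, ht', Function.update_self, add_smul, add_assoc]
      show AM t' l * GM t' l = _
      rw [h1, h2, mul_add, mul_smul_comm,
        show l + 1 - 1 - l = 0 by omega]
      simp [CM, AM]

lemma S4 (t : ℕ → ℂ) : ∀ m : ℕ,
    ∑ l ∈ Finset.range m,
      ((-1:ℂ)^(l+1) * t l) • (AM t l * EM l * CM t (l+1) (m-1-l))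
      = (2⁻¹:ℂ) • (AM t m * sigma3 - sigma3 * AM t m)
  | 0 => by simp [AM]
  | m+1 => by
    have ih := S4 t m
    rw [Finset.sum_range_succ]
    have hcongr : ∀ l ∈ Finset.range m,
        ((-1:ℂ)^(l+1) * t l) • (AM t l * EM l * CM t (l+1) (m+1-1-l))
          = (((-1:ℂ)^(l+1) * t l) • (AM t l * EM l * CM t (l+1) (m-1-l))) * GM t m := by
      intro l hl
      have hl' : l < m := Finset.mem_range.mp hl
      have h1 := S2' t (m-1-l) (l+1)
      rw [show (l+1)+(m-1-l) = m by omega] at h1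
      rw [show m+1-1-l = (m-1-l)+1 by omega, ← h1, smul_mul_assoc]
      simp only [mul_assoc]
    rw [Finset.sum_congr rfl hcongr, ← Finset.sum_mul, ih,
      show m+1-1-m = 0 by omega]
    have hCM0 : CM t (m+1) 0 = (1:Mat2) := rfl
    rw [hCM0, mul_one]
    show _ = (2⁻¹:ℂ) • (AM t m * GM t m * sigma3 - sigma3 * (AM t m * GM t m))
    rw [mul_assoc (AM t m), M1 t m, mul_add, mul_smul_comm, smul_mul_assoc, sub_mul]
    simp only [mul_assoc]
    module


def ex (K : ℕ) (u : Fin (2*K+2) → ℂ) : ℕ → ℂ :=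
  fun i => if h : i < 2*K+2 then u ⟨i, h⟩ else 0

lemma ex_lt (K : ℕ) (u : Fin (2*K+2) → ℂ) (i : ℕ) (h : i < 2*K+2) :
    ex K u i = u ⟨i, h⟩ := dif_pos h

lemma ex_update (K : ℕ) (s : Fin (2*K+2) → ℂ) (l : Fin (2*K+2)) (ε : ℂ) :
    ex K (s + ε • (Pi.single l 1 : Fin (2*K+2) → ℂ)) = Function.update (ex K s) (l:ℕ) (ex K s (l:ℕ) + ε) := by
  funext i
  by_cases h : i < 2*K+2
  · by_cases hil : i = (l:ℕ)
    · subst hil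
      rw [Function.update_self, ex_lt K _ _ h, ex_lt K s _ h]
      have hfin : (⟨(l:ℕ), h⟩ : Fin (2*K+2)) = l := Fin.ext rfl
      simp [hfin, Pi.single_apply]
    · have hfin : (⟨i, h⟩ : Fin (2*K+2)) ≠ l := fun hc => hil (by rw [← hc])
      rw [Function.update_of_ne hil, ex_lt K _ i h, ex_lt K s i h]
      simp [hfin, Pi.single_apply]
  · have hil : i ≠ (l:ℕ) := by have := l.isLt; omega
    rw [Function.update_of_ne hil]
    simp [ex, h]

lemma exdiff (K : ℕ) (i : ℕ) :
    Differentiable ℂ (fun u : Fin (2*K+2) → ℂ => ex K u i) := by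
  unfold ex
  by_cases h : i < 2*K+2
  · simp only [dif_pos h]
    exact differentiable_pi.mp differentiable_id _
  · simp only [dif_neg h]
    exact differentiable_const 0

lemma Ldiff (K : ℕ) : ∀ (m : ℕ) (a b : Fin 2),
    Differentiable ℂ (fun u : Fin (2*K+2) → ℂ => AM (ex K u) m a b)
  | 0, a, b => by
    have : (fun u : Fin (2*K+2) → ℂ => AM (ex K u) 0 a b) = fun _ => (1:Mat2) a b := rfl
    rw [this]; exact differentiable_const _
  | m+1, a, b => by
    have hG : ∀ c d : Fin 2,
        Differentiable ℂ (fun u : Fin (2*K+2) → ℂ => GM (ex K u) m c d) := by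
      intro c d
      have : (fun u : Fin (2*K+2) → ℂ => GM (ex K u) m c d)
          = fun u => (1:Mat2) c d + ex K u m * EM m c d := by
        funext u
        rw [GM_eq]
        simp [Matrix.add_apply, Matrix.smul_apply, smul_eq_mul]
      rw [this]
      exact (differentiable_const _).add ((exdiff K m).mul (differentiable_const _))
    have : (fun u : Fin (2*K+2) → ℂ => AM (ex K u) (m+1) a b)
        = fun u => AM (ex K u) m a 0 * GM (ex K u) m 0 b
            + AM (ex K u) m a 1 * GM (ex K u) m 1 b := by
      funext u
      show (AM (ex K u) m * GM (ex K u) m) a b = _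
      rw [Matrix.mul_apply, Fin.sum_univ_two]
    rw [this]
    exact ((Ldiff K m a 0).mul (hG 0 b)).add ((Ldiff K m a 1).mul (hG 1 b))

lemma gdiff (K : ℕ) (W : Mat2) (m : ℕ) (a b : Fin 2) :
    Differentiable ℂ (fun u : Fin (2*K+2) → ℂ => (AM (ex K u) m * W) a b) := by
  have : (fun u : Fin (2*K+2) → ℂ => (AM (ex K u) m * W) a b)
      = fun u => AM (ex K u) m a 0 * W 0 b + AM (ex K u) m a 1 * W 1 b := by
    funext u
    rw [Matrix.mul_apply, Fin.sum_univ_two]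
  rw [this]
  exact ((Ldiff K m a 0).mul_const _).add ((Ldiff K m a 1).mul_const _)

lemma DVALg (K : ℕ) (s : Fin (2*K+2) → ℂ) (W : Mat2) (m : ℕ) (l : Fin (2*K+2)) (a b : Fin 2) :
    fderiv ℂ (fun u => (AM (ex K u) m * W) a b) s (Pi.single l 1)
      = ((if (l:ℕ) < m then
          AM (ex K s) (l:ℕ) * EM (l:ℕ) * CM (ex K s) ((l:ℕ)+1) (m-1-(l:ℕ)) else 0) * W) a b := by
  set X : Mat2 := if (l:ℕ) < m then
      AM (ex K s) (l:ℕ) * EM (l:ℕ) * CM (ex K s) ((l:ℕ)+1) (m-1-(l:ℕ)) else 0 with hX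
  have key : ∀ ε : ℂ, AM (ex K (s + ε • (Pi.single l 1 : Fin (2*K+2) → ℂ))) m = AM (ex K s) m + ε • X := by
    intro ε
    rw [ex_update]
    by_cases hl : (l:ℕ) < m
    · rw [AFF (ex K s) (l:ℕ) ε m hl, hX, if_pos hl]
    · have h0 : AM (Function.update (ex K s) (l:ℕ) (ex K s (l:ℕ) + ε)) m = AM (ex K s) m :=
        AM_congr _ _ m (fun i hi => Function.update_of_ne (by omega) _ _)
      rw [h0, hX, if_neg hl]
      simp
  have hval : ∀ ε : ℂ, (AM (ex K (s + ε • (Pi.single l 1 : Fin (2*K+2) → ℂ))) m * W) a b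
      = (AM (ex K s) m * W) a b + ε * ((X * W) a b) := by
    intro ε
    rw [key ε, Matrix.add_mul, Matrix.add_apply, smul_mul_assoc, Matrix.smul_apply, smul_eq_mul]
  have h1 : HasDerivAt (fun ε : ℂ => (AM (ex K (s + ε • (Pi.single l 1 : Fin (2*K+2) → ℂ))) m * W) a b)
      ((X * W) a b) 0 := by
    rw [show (fun ε : ℂ => (AM (ex K (s + ε • (Pi.single l 1 : Fin (2*K+2) → ℂ))) m * W) a b)
        = fun ε : ℂ => (AM (ex K s) m * W) a b + ε * ((X * W) a b) from funext hval]
    exact (hasDerivAt_mul_const ((X * W) a b)).const_add ((AM (ex K s) m * W) a b)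
  have hline : HasDerivAt (fun ε : ℂ => s + ε • (Pi.single l 1 : Fin (2*K+2) → ℂ)) (Pi.single l 1 : Fin (2*K+2) → ℂ) 0 := by
    simpa using ((hasDerivAt_id (0:ℂ)).smul_const (Pi.single l 1 : Fin (2*K+2) → ℂ)).const_add s
  have hF : HasFDerivAt (fun u => (AM (ex K u) m * W) a b)
      (fderiv ℂ (fun u => (AM (ex K u) m * W) a b) s) (s + (0:ℂ) • (Pi.single l 1 : Fin (2*K+2) → ℂ)) := by
    have h0 : s + (0:ℂ) • (Pi.single l 1 : Fin (2*K+2) → ℂ) = s := by simp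
    rw [h0]
    exact (gdiff K W m a b s).hasFDerivAt
  have h2 := hF.comp_hasDerivAt 0 hline
  exact ((h2.unique h1)).symm ▸ rfl


lemma LP (t : ℕ → ℂ) : ∀ m : ℕ,
    (List.ofFn (fun i : Fin m => Umat (t (2*(i:ℕ))) * Lmat (t (2*(i:ℕ)+1)))).prod = AM t (2*m)
  | 0 => by
    show ([] : List Mat2).prod = AM t 0
    simp [AM]
  | m+1 => by
    rw [List.ofFn_succ', List.prod_concat]
    have hcast : (List.ofFn fun i : Fin m =>
        (fun i : Fin (m+1) => Umat (t (2*(i:ℕ))) * Lmat (t (2*(i:ℕ)+1))) i.castSucc)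
        = List.ofFn fun i : Fin m => Umat (t (2*(i:ℕ))) * Lmat (t (2*(i:ℕ)+1)) := by
      congr 1
    rw [hcast, LP t m]
    have e1 : GM t (2*m) = Umat (t (2*m)) := by unfold GM; rw [if_pos (by omega)]
    have e2 : GM t (2*m+1) = Lmat (t (2*m+1)) := by unfold GM; rw [if_neg (by omega)]
    show AM t (2*m) * (Umat (t (2*(Fin.last m : Fin (m+1)):ℕ)) * Lmat (t (2*((Fin.last m : Fin (m+1)):ℕ)+1))) = AM t (2*(m+1))
    rw [Fin.val_last, show 2*(m+1) = (2*m+1)+1 by omega]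
    show _ = AM t (2*m+1) * GM t (2*m+1)
    rw [show AM t (2*m+1) = AM t (2*m) * GM t (2*m) from rfl, e1, e2, mul_assoc]

lemma FEQ (K : ℕ) (u : Fin (2*K+2) → ℂ) (ll : ℂ) :
    Fmat K u ll = AM (ex K u) (2*K+2) * !![ll, 0; 0, ll⁻¹] := by
  unfold Fmat
  congr 1
  rw [congrArg (AM (ex K u)) (show 2*K+2 = 2*(K+1) by omega), ← LP (ex K u) (K+1)]
  exact congrArg List.prod (congrArg List.ofFn (funext fun i => by
    rw [ex_lt K u (2*(i:ℕ)) (by have := i.isLt; omega),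
      ex_lt K u (2*(i:ℕ)+1) (by have := i.isLt; omega)]))


lemma pS_coord (K : ℕ) (i0 j : Fin (2*K+2)) (s : Fin (2*K+2) → ℂ) (lam : ℂ) :
    pS K j (fun t _ => t i0) s lam = if i0 = j then 1 else 0 := by
  show fderiv ℂ (fun t : Fin (2*K+2) → ℂ => t i0) s (Pi.single j 1) = _
  have h : HasFDerivAt (fun t : Fin (2*K+2) → ℂ => t i0)
      (ContinuousLinearMap.proj i0 : (Fin (2*K+2) → ℂ) →L[ℂ] ℂ) s :=
    hasFDerivAt_apply i0 s
  rw [h.fderiv]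
  simp [Pi.single_apply]

lemma pL_coord (K : ℕ) (i0 : Fin (2*K+2)) (s : Fin (2*K+2) → ℂ) (lam : ℂ) :
    pL K (fun t _ => t i0) s lam = 0 := by
  show deriv (fun _ : ℂ => s i0) lam = 0
  simp

lemma pS_g (K : ℕ) (s : Fin (2*K+2) → ℂ) (lam : ℂ) (l : Fin (2*K+2)) (a b : Fin 2) :
    pS K l (fun t ll => (AM (ex K t) (2*K+2) * !![ll,0;0,ll⁻¹]) a b) s lam
      = (AM (ex K s) (l:ℕ) * EM (l:ℕ) * CM (ex K s) ((l:ℕ)+1) (2*K+2-1-(l:ℕ))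
          * !![lam,0;0,lam⁻¹]) a b := by
  show fderiv ℂ (fun u => (AM (ex K u) (2*K+2) * !![lam,0;0,lam⁻¹]) a b) s (Pi.single l 1) = _
  rw [DVALg K s _ (2*K+2) l a b, if_pos l.isLt]

lemma pL_g (K : ℕ) (s : Fin (2*K+2) → ℂ) (lam : ℂ) (hlam : lam ≠ 0) (a b : Fin 2) :
    pL K (fun t ll => (AM (ex K t) (2*K+2) * !![ll,0;0,ll⁻¹]) a b) s lam
      = (AM (ex K s) (2*K+2) * !![1,0;0,-(lam^2)⁻¹]) a b := by
  show deriv (fun ll : ℂ => (AM (ex K s) (2*K+2) * !![ll,0;0,ll⁻¹]) a b) lam = _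
  set P := AM (ex K s) (2*K+2) with hP
  have hfun : ∀ b' : Fin 2, (fun ll : ℂ => (P * !![ll,0;0,ll⁻¹]) a b')
      = fun ll => P a 0 * !![ll,(0:ℂ);0,ll⁻¹] 0 b' + P a 1 * !![ll,(0:ℂ);0,ll⁻¹] 1 b' := by
    intro b'; funext ll; rw [Matrix.mul_apply, Fin.sum_univ_two]
  rw [Matrix.mul_apply, Fin.sum_univ_two]
  have hb : b = 0 ∨ b = 1 := by omega
  rcases hb with hb | hb
  · subst hb
    rw [hfun 0]
    have h : HasDerivAt (fun ll : ℂ => P a 0 * ll + P a 1 * 0) (P a 0) lam := by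
      simpa using ((hasDerivAt_id lam).const_mul (P a 0)).add_const (P a 1 * 0)
    have hrw : (fun ll : ℂ => P a 0 * !![ll,(0:ℂ);0,ll⁻¹] 0 0 + P a 1 * !![ll,(0:ℂ);0,ll⁻¹] 1 0)
        = fun ll : ℂ => P a 0 * ll + P a 1 * 0 := by
      funext ll; norm_num
    rw [hrw, h.deriv]
    norm_num
  · subst hb
    rw [hfun 1]
    have h : HasDerivAt (fun ll : ℂ => P a 0 * 0 + P a 1 * ll⁻¹)
        (P a 1 * (-(lam^2)⁻¹)) lam := by
      simpa using ((hasDerivAt_inv hlam).const_mul (P a 1)).const_add (P a 0 * 0)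
    have hrw : (fun ll : ℂ => P a 0 * !![ll,(0:ℂ);0,ll⁻¹] 0 1 + P a 1 * !![ll,(0:ℂ);0,ll⁻¹] 1 1)
        = fun ll : ℂ => P a 0 * 0 + P a 1 * ll⁻¹ := by
      funext ll; norm_num
    rw [hrw, h.deriv]
    norm_num


/-- `∂_l F` as a matrix: `A_l E_l C_{l+1..n-1} D`. -/
def TT (K : ℕ) (s : Fin (2*K+2) → ℂ) (lam : ℂ) (l : ℕ) : Mat2 :=
  AM (ex K s) l * EM l * CM (ex K s) (l+1) (2*K+2-1-l) * !![lam, 0; 0, lam⁻¹]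

lemma pS_g' (K : ℕ) (s : Fin (2*K+2) → ℂ) (lam : ℂ) (l : Fin (2*K+2)) (a b : Fin 2) :
    pS K l (fun t ll => (AM (ex K t) (2*K+2) * !![ll,0;0,ll⁻¹]) a b) s lam
      = TT K s lam (l:ℕ) a b := by
  rw [pS_g K s lam l a b]
  rfl

lemma br_collapse (K : ℕ) (s : Fin (2*K+2) → ℂ) (lam : ℂ) (hlam : lam ≠ 0)
    (i0 : Fin (2*K+2)) (hi0 : (i0:ℕ) = 0) (a b : Fin 2) :
    fnBr K (fun t _ => t i0) (fun t ll => (AM (ex K t) (2*K+2) * !![ll,0;0,ll⁻¹]) a b) s lam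
      = (∑ l : Fin (2*K+2), if 0 < (l:ℕ) then cSS K i0 l s lam * (TT K s lam (l:ℕ) a b) else 0)
        + cSL K i0 s lam * ((AM (ex K s) (2*K+2) * !![1,0;0,-(lam^2)⁻¹]) a b) := by
  unfold fnBr
  congr 1
  · rw [Finset.sum_eq_single i0 ?_ ?_]
    · apply Finset.sum_congr rfl
      intro l _
      by_cases hl : (i0:ℕ) < (l:ℕ)
      · rw [if_pos hl, if_pos (show 0 < (l:ℕ) by omega)]
        have hl0 : ¬ (i0 = l) := by
          intro h
          rw [h] at hi0
          omega
        rw [pS_coord, pS_coord, if_pos rfl, if_neg hl0, pS_g']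
        ring
      · rw [if_neg hl, if_neg (show ¬ 0 < (l:ℕ) by omega)]
    · intro j _ hj
      apply Finset.sum_eq_zero
      intro l _
      by_cases hl : (j:ℕ) < (l:ℕ)
      · rw [if_pos hl]
        have h1 : ¬ (i0 = j) := fun h => hj h.symm
        have h2 : ¬ (i0 = l) := by
          intro h
          rw [← h] at hl
          omega
        rw [pS_coord, pS_coord, if_neg h1, if_neg h2]
        ring
      · rw [if_neg hl]
    · intro h
      exact absurd (Finset.mem_univ i0) h
  · rw [Finset.sum_eq_single i0 ?_ ?_]
    · rw [pS_coord, if_pos rfl, pL_coord, pL_g K s lam hlam]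
      ring
    · intro j _ hj
      rw [pS_coord, if_neg (fun h => hj h.symm), pL_coord]
      ring
    · intro h
      exact absurd (Finset.mem_univ i0) h


lemma MAIN (K : ℕ) (hK : 1 ≤ K) (s : Fin (2*K+2) → ℂ) (lam : ℂ) (hlam : lam ≠ 0)
    (i0 : Fin (2*K+2)) (hi0 : (i0:ℕ) = 0) :
    (∑ l : Fin (2*K+2), if 0 < (l:ℕ) then cSS K i0 l s lam • TT K s lam (l:ℕ) else 0)
      + cSL K i0 s lam • (AM (ex K s) (2*K+2) * !![1,0;0,-(lam^2)⁻¹])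
    = (s i0 / 2) • (sigma3 * (AM (ex K s) (2*K+2) * !![lam,0;0,lam⁻¹])
          - (AM (ex K s) (2*K+2) * !![lam,0;0,lam⁻¹]) * sigma3)
      + (sigmaM * (AM (ex K s) (2*K+2) * !![lam,0;0,lam⁻¹])
          - (AM (ex K s) (2*K+2) * !![lam,0;0,lam⁻¹]) * sigmaM) := by
  have hs0 : s i0 = ex K s 0 := by
    rw [ex_lt K s 0 (by omega)]
    exact congrArg s (Fin.ext (by simp [hi0]))
  set t := ex K s with ht
  have hM5' : ∀ (aa : ℂ) (X : Mat2), sigmaP * (Umat aa * X) = sigmaP * X := fun aa X => by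
    rw [← mul_assoc, M5]
  have hM3' : ∀ (aa : ℂ) (X : Mat2), sigmaM * (Lmat aa * X) = sigmaM * X := fun aa X => by
    rw [← mul_assoc, M3]
  set c : ℕ → ℂ := fun l => (if 1 = l then (1:ℂ) else 0)
      - (if l = 2*K+1 then (lam^2)⁻¹ else 0) + (-1:ℂ)^(l+1) * t 0 * t l with hcdef
  have hc : ∀ l : Fin (2*K+2), 0 < (l:ℕ) → cSS K i0 l s lam = c (l:ℕ) := by
    intro l _
    have h1 : s l = t (l:ℕ) := by rw [ht, ex_lt K s (l:ℕ) l.isLt]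
    unfold cSS
    rw [hi0, h1, hs0, hcdef]
    norm_num
  have hfin : (∑ l : Fin (2*K+2), if 0 < (l:ℕ) then cSS K i0 l s lam • TT K s lam (l:ℕ) else 0)
      = ∑ l ∈ Finset.range (2*K+2), (if 0 < l then c l • TT K s lam l else 0) := by
    rw [← Fin.sum_univ_eq_sum_range (fun l => if 0 < l then c l • TT K s lam l else 0) (2*K+2)]
    refine Finset.sum_congr rfl (fun l _ => ?_)
    by_cases h0 : 0 < (l:ℕ)
    · rw [if_pos h0, if_pos h0, hc l h0]
    · rw [if_neg h0, if_neg h0]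
  rw [hfin]
  have hsplit : (∑ l ∈ Finset.range (2*K+2), (if 0 < l then c l • TT K s lam l else 0))
      = ((∑ l ∈ Finset.range (2*K+2),
            (if 0 < l then (if 1 = l then (1:ℂ) else 0) • TT K s lam l else 0))
        - ∑ l ∈ Finset.range (2*K+2),
            (if 0 < l then (if l = 2*K+1 then (lam^2)⁻¹ else 0) • TT K s lam l else 0))
        + ∑ l ∈ Finset.range (2*K+2),
            (if 0 < l then ((-1:ℂ)^(l+1) * t 0 * t l) • TT K s lam l else 0) := by
    rw [← Finset.sum_sub_distrib, ← Finset.sum_add_distrib]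
    refine Finset.sum_congr rfl (fun l _ => ?_)
    by_cases h0 : 0 < l
    · simp only [if_pos h0, hcdef]
      rw [add_smul, sub_smul]
    · simp only [if_neg h0]
      simp
  rw [hsplit]
  have hA : (∑ l ∈ Finset.range (2*K+2),
      (if 0 < l then (if 1 = l then (1:ℂ) else 0) • TT K s lam l else 0)) = TT K s lam 1 := by
    rw [Finset.sum_eq_single 1 ?_ ?_]
    · norm_num
    · intro l _ hl
      by_cases h0 : 0 < l
      · rw [if_pos h0, if_neg (fun h => hl h.symm), zero_smul]
      · rw [if_neg h0]
    · intro h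
      exact absurd (Finset.mem_range.mpr (by omega)) h
  have hB : (∑ l ∈ Finset.range (2*K+2),
      (if 0 < l then (if l = 2*K+1 then (lam^2)⁻¹ else 0) • TT K s lam l else 0))
      = (lam^2)⁻¹ • TT K s lam (2*K+1) := by
    rw [Finset.sum_eq_single (2*K+1) ?_ ?_]
    · rw [if_pos (by omega), if_pos rfl]
    · intro l _ hl
      by_cases h0 : 0 < l
      · rw [if_pos h0, if_neg hl, zero_smul]
      · rw [if_neg h0]
    · intro h
      exact absurd (Finset.mem_range.mpr (by omega)) h
  have hC : (∑ l ∈ Finset.range (2*K+2),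
      (if 0 < l then ((-1:ℂ)^(l+1) * t 0 * t l) • TT K s lam l else 0))
      = t 0 • ((2⁻¹:ℂ) • (AM t (2*K+2) * sigma3 - sigma3 * AM t (2*K+2)) * !![lam,0;0,lam⁻¹])
        + (t 0 * t 0) • TT K s lam 0 := by
    have e0 : (0:ℕ) ∈ Finset.range (2*K+2) := Finset.mem_range.mpr (by omega)
    have h1 : (∑ l ∈ Finset.range (2*K+2),
        (if 0 < l then ((-1:ℂ)^(l+1) * t 0 * t l) • TT K s lam l else 0))
        = ∑ l ∈ (Finset.range (2*K+2)).erase 0,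
            ((-1:ℂ)^(l+1) * t 0 * t l) • TT K s lam l := by
      rw [← Finset.sum_erase_add _ _ e0, if_neg (lt_irrefl 0), add_zero]
      refine Finset.sum_congr rfl (fun l hl => ?_)
      rw [if_pos (Nat.pos_of_ne_zero (Finset.ne_of_mem_erase hl))]
    have h2 : (∑ l ∈ (Finset.range (2*K+2)).erase 0,
        ((-1:ℂ)^(l+1) * t 0 * t l) • TT K s lam l)
        = (∑ l ∈ Finset.range (2*K+2), ((-1:ℂ)^(l+1) * t 0 * t l) • TT K s lam l)
          - ((-1:ℂ)^(0+1) * t 0 * t 0) • TT K s lam 0 :=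
      eq_sub_of_add_eq (Finset.sum_erase_add _ _ e0)
    have h3 : ∀ l, ((-1:ℂ)^(l+1) * t 0 * t l) • TT K s lam l
        = t 0 • ((((-1:ℂ)^(l+1) * t l) • (AM t l * EM l * CM t (l+1) (2*K+2-1-l)))
            * !![lam,0;0,lam⁻¹]) := by
      intro l
      rw [smul_mul_assoc, smul_smul]
      show ((-1:ℂ)^(l+1) * t 0 * t l)
          • (AM t l * EM l * CM t (l+1) (2*K+2-1-l) * !![lam,0;0,lam⁻¹]) = _
      congr 1
      ring
    have h4 : (∑ l ∈ Finset.range (2*K+2), ((-1:ℂ)^(l+1) * t 0 * t l) • TT K s lam l)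
        = t 0 • ((∑ l ∈ Finset.range (2*K+2),
            ((-1:ℂ)^(l+1) * t l) • (AM t l * EM l * CM t (l+1) (2*K+2-1-l)))
          * !![lam,0;0,lam⁻¹]) := by
      rw [Finset.sum_mul, Finset.smul_sum]
      exact Finset.sum_congr rfl (fun l _ => h3 l)
    rw [h1, h2, h4, S4 t (2*K+2)]
    have h5 : ((-1:ℂ)^(0+1) * t 0 * t 0) = -(t 0 * t 0) := by norm_num
    rw [h5, neg_smul, sub_neg_eq_add]
  rw [hA, hB, hC]
  -- structural identities
  have hGM0 : GM t 0 = Umat (t 0) := by simp [GM]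
  have hPfac : AM t (2*K+2) = Umat (t 0) * CM t 1 (2*K+1) := by
    rw [← S6 t (2*K+2)]
    show GM t 0 * CM t (0+1) (2*K+1) = Umat (t 0) * CM t 1 (2*K+1)
    rw [hGM0]
  have hT0 : TT K s lam 0 = sigmaP * (AM t (2*K+2) * !![lam,0;0,lam⁻¹]) := by
    have h6 : sigmaP * (AM t (2*K+2) * !![lam,0;0,lam⁻¹])
        = sigmaP * (CM t 1 (2*K+1) * !![lam,0;0,lam⁻¹]) := by
      rw [hPfac, mul_assoc, hM5']
    rw [h6]
    show (1:Mat2) * sigmaP * CM t 1 (2*K+1) * !![lam,0;0,lam⁻¹]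
        = sigmaP * (CM t 1 (2*K+1) * !![lam,0;0,lam⁻¹])
    rw [one_mul, mul_assoc]
  have hT1 : TT K s lam 1
      = (sigmaM + t 0 • sigma3 - (t 0^2) • sigmaP) * (AM t (2*K+2) * !![lam,0;0,lam⁻¹]) := by
    have hA1 : AM t 1 = Umat (t 0) := by
      show (1:Mat2) * GM t 0 = _
      rw [one_mul, hGM0]
    have hCM1 : CM t 1 (2*K+1) = Lmat (t 1) * CM t 2 (2*K) := by
      show GM t 1 * CM t 2 (2*K) = _
      rw [show GM t 1 = Lmat (t 1) from by simp [GM]]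
    calc TT K s lam 1
        = Umat (t 0) * (sigmaM * (CM t 2 (2*K) * !![lam,0;0,lam⁻¹])) := by
          show AM t 1 * EM 1 * CM t 2 (2*K) * !![lam,0;0,lam⁻¹] = _
          rw [hA1, show EM 1 = sigmaM from rfl, mul_assoc, mul_assoc]
      _ = Umat (t 0) * (sigmaM * (CM t 1 (2*K+1) * !![lam,0;0,lam⁻¹])) := by
          have h7 : sigmaM * (CM t 1 (2*K+1) * !![lam,0;0,lam⁻¹])
              = sigmaM * (CM t 2 (2*K) * !![lam,0;0,lam⁻¹]) := by
            rw [hCM1, mul_assoc, hM3']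
          rw [h7]
      _ = (sigmaM + t 0 • sigma3 - (t 0^2) • sigmaP)
            * (AM t (2*K+2) * !![lam,0;0,lam⁻¹]) := by
          rw [hPfac]
          simp only [← mul_assoc]
          rw [← M2u]
  have hTn : TT K s lam (2*K+1)
      = (lam^2) • ((AM t (2*K+2) * !![lam,0;0,lam⁻¹]) * sigmaM) := by
    have hodd : EM (2*K+1) = sigmaM := by
      unfold EM
      rw [if_neg (by omega)]
    have hAn : AM t (2*K+2) * sigmaM = AM t (2*K+1) * sigmaM := by
      show AM t (2*K+1) * GM t (2*K+1) * sigmaM = _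
      rw [show GM t (2*K+1) = Lmat (t (2*K+1)) from by unfold GM; rw [if_neg (by omega)],
        mul_assoc, M4]
    calc TT K s lam (2*K+1)
        = AM t (2*K+1) * sigmaM * !![lam,0;0,lam⁻¹] := by
          show AM t (2*K+1) * EM (2*K+1) * CM t (2*K+1+1) (2*K+2-1-(2*K+1))
              * !![lam,0;0,lam⁻¹] = _
          rw [hodd, show (2*K+2-1-(2*K+1)) = 0 by omega,
            show CM t (2*K+1+1) 0 = (1:Mat2) from rfl, mul_one]
      _ = AM t (2*K+2) * (sigmaM * !![lam,0;0,lam⁻¹]) := by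
          rw [← hAn, mul_assoc]
      _ = (lam^2) • ((AM t (2*K+2) * !![lam,0;0,lam⁻¹]) * sigmaM) := by
          rw [M6 lam hlam, mul_smul_comm, ← mul_assoc]
  have hcSL : cSL K i0 s lam = -(t 0 * lam) := by
    unfold cSL
    rw [hi0, hs0]
    ring
  have hLterm : cSL K i0 s lam • (AM t (2*K+2) * !![1,0;0,-(lam^2)⁻¹])
      = (-(t 0)) • ((AM t (2*K+2) * !![lam,0;0,lam⁻¹]) * sigma3) := by
    rw [hcSL]
    have h8 : (-(t 0 * lam)) • (AM t (2*K+2) * !![1,0;0,-(lam^2)⁻¹])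
        = (-(t 0)) • (AM t (2*K+2) * (lam • !![1,0;0,-(lam^2)⁻¹])) := by
      rw [mul_smul_comm, smul_smul]
      congr 1
      ring
    rw [h8, M8 lam hlam, ← mul_assoc]
  have hmid : (2⁻¹:ℂ) • (AM t (2*K+2) * sigma3 - sigma3 * AM t (2*K+2)) * !![lam,0;0,lam⁻¹]
      = (2⁻¹:ℂ) • ((AM t (2*K+2) * !![lam,0;0,lam⁻¹]) * sigma3
          - sigma3 * (AM t (2*K+2) * !![lam,0;0,lam⁻¹])) := by
    rw [smul_mul_assoc, sub_mul, mul_assoc (AM t (2*K+2)) sigma3, M7 lam, ← mul_assoc,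
      mul_assoc sigma3]
  have hlam2 : ((lam^2)⁻¹ : ℂ) • ((lam^2:ℂ) • ((AM t (2*K+2) * !![lam,0;0,lam⁻¹]) * sigmaM))
      = (AM t (2*K+2) * !![lam,0;0,lam⁻¹]) * sigmaM := by
    rw [smul_smul, inv_mul_cancel₀ (pow_ne_zero 2 hlam), one_smul]
  rw [hT0, hT1, hTn, hLterm, hmid, hlam2, hs0]
  simp only [add_mul, sub_mul, smul_mul_assoc]
  module

end FN

/-- `{s_1, F}_{FN} = (s_1/2)[σ3, F] + [σ₋, F]`, entrywise,
identically on `ℂ^{2K+2} × ℂ*`. -/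
theorem fn_bracket_s1_F (K : ℕ) (hK : 1 ≤ K) (s : Fin (2*K+2) → ℂ) (lam : ℂ)
    (hlam : lam ≠ 0) (a b : Fin 2) :
    fnBr K (fun t _ => t ⟨0, by omega⟩) (fun t l => Fmat K t l a b) s lam
      = ((s ⟨0, by omega⟩ / 2) • (sigma3 * Fmat K s lam - Fmat K s lam * sigma3)
          + (sigmaM * Fmat K s lam - Fmat K s lam * sigmaM)) a b := by
  have hgfun : (fun t l => Fmat K t l a b)
      = fun t ll => (FN.AM (FN.ex K t) (2*K+2) * !![ll,0;0,ll⁻¹]) a b := by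
    funext u ll
    rw [FN.FEQ]
  rw [hgfun, FN.br_collapse K s lam hlam ⟨0, by omega⟩ rfl a b, FN.FEQ K s lam]
  have hmain := FN.MAIN K hK s lam hlam ⟨0, by omega⟩ rfl
  have h2 := congrArg (fun M : Matrix (Fin 2) (Fin 2) ℂ => M a b) hmain
  simp only [Matrix.add_apply, Matrix.sub_apply, Matrix.sum_apply, Matrix.smul_apply,
    smul_eq_mul, ite_apply, Matrix.zero_apply, Pi.zero_apply,
    apply_ite (fun M : Matrix (Fin 2) (Fin 2) ℂ => M a b)] at h2
  simp only [Matrix.add_apply, Matrix.sub_apply, Matrix.sum_apply, Matrix.smul_apply,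
    smul_eq_mul, ite_apply, Matrix.zero_apply, Pi.zero_apply]
  exact h2
end
end

section
/- For every integer K ≥ 1, the Flaschka–Newell bracket of s_{2K+2} with the matrix F = F_K satisfies, entrywise, {s_{2K+2}, F}_{FN} = (s_{2K+2}/2)[F, σ3] + λ^{−2}[σ+, F], where [X, Y] = XY − YX denotes the commutator. -/
noncomputable section

open Matrix Finset

/-!
Since `s_{2K+2}` is a coordinate, its bracket with `g` is the derivation
`g ↦ s_{2K+2} λ ∂_λ g - ∑_{j < 2K+2} {s_j, s_{2K+2}} ∂_j g`.
Write `F = P(s) diag(λ, λ⁻¹)`, with `P` the product of the unipotent factors. Only four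
derivatives of `P` occur: `∂_1 P = σ₊ P`; `∂_{2K+1} P` and `∂_{2K+2} P` hit only the last
factor `U(s_{2K+1}) L(s_{2K+2})`; and `∑ (-1)^j s_j ∂_j P = ½ [σ3, P]`, because the rescaling
`s_j ↦ e^{(-1)^j τ} s_j` conjugates every factor `U L` by `e^{τ σ3 / 2}`. What is left is a
`2 × 2` identity in the last factor.
-/

-- Any norm would do; this one makes square matrices a normed algebra, for the product rule.
attribute [local instance] Matrix.linftyOpNormedRing Matrix.linftyOpNormedAlgebra

section MatrixCalculus

variable {𝕜 E ι : Type*} [NontriviallyNormedField 𝕜] [NormedAddCommGroup E]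
  [NormedSpace 𝕜 E] [Fintype ι] [DecidableEq ι] {x : E}

-- `fderiv` on matrices elaborates with `Matrix.addCommGroup`, not with the structure coming
-- from the normed ring, so `fderiv_fun_mul'` only matches up to defeq; hence this restatement.
theorem fderiv_matrix_mul_apply {f g : E → Matrix ι ι 𝕜} (hf : DifferentiableAt 𝕜 f x)
    (hg : DifferentiableAt 𝕜 g x) (v : E) :
    fderiv 𝕜 (fun y => f y * g y) x v = fderiv 𝕜 f x v * g x + f x * fderiv 𝕜 g x v := by
  have h := congrArg (· v) (fderiv_fun_mul' hf hg)
  simp only [_root_.add_apply, FunLike.coe_smul, Pi.smul_apply, smul_eq_mul,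
    MulOpposite.smul_eq_mul_unop, MulOpposite.unop_op] at h
  exact h.trans (add_comm _ _)

theorem fderiv_mul_const_apply_apply {f : E → Matrix ι ι 𝕜} (hf : DifferentiableAt 𝕜 f x)
    (D : Matrix ι ι 𝕜) (a b : ι) (v : E) :
    fderiv 𝕜 (fun y => (f y * D) a b) x v = (fderiv 𝕜 f x v * D) a b := by
  let e : Matrix ι ι 𝕜 →L[𝕜] 𝕜 :=
    ((ContinuousLinearMap.proj b).comp (ContinuousLinearMap.proj a)).comp
      ((ContinuousLinearMap.mul 𝕜 (Matrix ι ι 𝕜)).flip D)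
  exact congrArg (· v) (e.hasFDerivAt.comp x hf.hasFDerivAt).fderiv

variable {n : ℕ} {f : Fin n → E → Matrix ι ι 𝕜}

theorem differentiableAt_ofFn_prod (hf : ∀ i, DifferentiableAt 𝕜 (f i) x) :
    DifferentiableAt 𝕜 (fun y => (List.ofFn fun i => f i y).prod) x := by
  induction n with
  | zero => simp
  | succ n ih =>
    simp only [List.ofFn_succ, List.prod_cons]
    exact (hf 0).mul (ih fun i => hf i.succ)

theorem fderiv_ofFn_prod_apply_of_commutator (hf : ∀ i, DifferentiableAt 𝕜 (f i) x) {v : E}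
    (C : Matrix ι ι 𝕜) (h : ∀ i, fderiv 𝕜 (f i) x v = C * f i x - f i x * C) :
    fderiv 𝕜 (fun y => (List.ofFn fun i => f i y).prod) x v
      = C * (List.ofFn fun i => f i x).prod - (List.ofFn fun i => f i x).prod * C := by
  induction n with
  | zero => simp
  | succ n ih =>
    simp only [List.ofFn_succ, List.prod_cons]
    rw [fderiv_matrix_mul_apply (hf 0) (differentiableAt_ofFn_prod fun i => hf i.succ),
      h 0, ih (fun i => hf i.succ) (fun i => h i.succ)]
    noncomm_ring

theorem fderiv_ofFn_prod_apply_eq_zero (hf : ∀ i, DifferentiableAt 𝕜 (f i) x) {v : E}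
    (h : ∀ i, fderiv 𝕜 (f i) x v = 0) :
    fderiv 𝕜 (fun y => (List.ofFn fun i => f i y).prod) x v = 0 := by
  simpa using fderiv_ofFn_prod_apply_of_commutator hf 0 (by simpa using h)

end MatrixCalculus

section Unipotent

theorem Umat_eq_smul_add_one (a : ℂ) : Umat a = a • sigmaP + 1 := by
  ext i j; fin_cases i <;> fin_cases j <;> simp [Umat, sigmaP]

theorem Lmat_eq_smul_add_one (a : ℂ) : Lmat a = a • sigmaM + 1 := by
  ext i j; fin_cases i <;> fin_cases j <;> simp [Lmat, sigmaM]

theorem hasDerivAt_Umat (a : ℂ) : HasDerivAt Umat sigmaP a := by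
  rw [funext Umat_eq_smul_add_one]
  exact (((hasDerivAt_id a).smul_const sigmaP).add_const 1).congr_deriv (one_smul ℂ sigmaP)

theorem hasDerivAt_Lmat (a : ℂ) : HasDerivAt Lmat sigmaM a := by
  rw [funext Lmat_eq_smul_add_one]
  exact (((hasDerivAt_id a).smul_const sigmaM).add_const 1).congr_deriv (one_smul ℂ sigmaM)

theorem differentiable_Umat_mul_Lmat {ι : Type*} [Fintype ι] (j k : ι) :
    Differentiable ℂ fun t : ι → ℂ => Umat (t j) * Lmat (t k) := fun t =>
  ((hasDerivAt_Umat _).differentiableAt.comp t (differentiableAt_apply j t)).mul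
    ((hasDerivAt_Lmat _).differentiableAt.comp t (differentiableAt_apply k t))

theorem fderiv_Umat_mul_Lmat_apply {ι : Type*} [Fintype ι] (j k : ι) (t v : ι → ℂ) :
    fderiv ℂ (fun t : ι → ℂ => Umat (t j) * Lmat (t k)) t v
      = v j • (sigmaP * Lmat (t k)) + v k • (Umat (t j) * sigmaM) := by
  have hU := (hasDerivAt_Umat (t j)).hasFDerivAt.comp t (hasFDerivAt_apply (𝕜 := ℂ) j t)
  have hL := (hasDerivAt_Lmat (t k)).hasFDerivAt.comp t (hasFDerivAt_apply (𝕜 := ℂ) k t)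
  have h : HasFDerivAt (fun t : ι → ℂ => Umat (t j) * Lmat (t k)) _ t := hU.mul' hL
  rw [h.fderiv]
  change Umat (t j) * (v k • sigmaM) + (v j • sigmaP) * Lmat (t k) = _
  rw [mul_smul_comm, smul_mul_assoc, add_comm]

theorem sigmaP_mul_Umat (a : ℂ) : sigmaP * Umat a = sigmaP := by
  simp [Umat_eq_smul_add_one, mul_add, sigmaP]

theorem commutator_half_sigma3_Umat_mul_Lmat (a b : ℂ) :
    (2⁻¹ : ℂ) • (sigma3 * (Umat a * Lmat b) - Umat a * Lmat b * sigma3)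
      = a • (sigmaP * Lmat b) - b • (Umat a * sigmaM) := by
  ext i j; fin_cases i <;> fin_cases j <;> simp [Umat, Lmat, sigma3, sigmaP, sigmaM] <;> ring

theorem Umat_mul_Lmat_mul_sigmaP_add (u v : ℂ) :
    Umat u * Lmat v * sigmaP + v • (Umat u * Lmat v * sigma3)
      = sigmaP * Lmat v + v ^ 2 • (Umat u * sigmaM) := by
  ext i j; fin_cases i <;> fin_cases j <;> simp [Umat, Lmat, sigma3, sigmaP, sigmaM] <;> ring

theorem diag_mul_sigma3 (lam : ℂ) :
    !![lam, 0; 0, lam⁻¹] * sigma3 = sigma3 * !![lam, 0; 0, lam⁻¹] := by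
  ext i j; fin_cases i <;> fin_cases j <;> simp [sigma3]

theorem inv_sq_smul_diag_mul_sigmaP (lam : ℂ) :
    (lam ^ 2)⁻¹ • (!![lam, 0; 0, lam⁻¹] * sigmaP) = sigmaP * !![lam, 0; 0, lam⁻¹] := by
  ext i j; fin_cases i <;> fin_cases j <;> simp [sigmaP]; field_simp

-- At `lam = 0` both sides vanish, by the conventions `0⁻¹ = 0` and `deriv (·⁻¹) 0 = 0`.
theorem lam_mul_deriv_mul_diag (M : Matrix (Fin 2) (Fin 2) ℂ) (a b : Fin 2) (lam : ℂ) :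
    lam * deriv (fun l => (M * !![l, 0; 0, l⁻¹]) a b) lam
      = (M * !![lam, 0; 0, lam⁻¹] * sigma3) a b := by
  fin_cases b
  · simp [Matrix.mul_apply, sigma3]
    ring
  · simp [Matrix.mul_apply, sigma3]
    field_simp

theorem sLast_bracket_matrix_identity (P : Matrix (Fin 2) (Fin 2) ℂ) (u v lam : ℂ) :
    let D : Matrix (Fin 2) (Fin 2) ℂ := !![lam, 0; 0, lam⁻¹]
    let Q := P * (Umat u * Lmat v)
    v • (Q * D * sigma3) - (P * (sigmaP * Lmat v) * D - (lam ^ 2)⁻¹ • (sigmaP * Q * D)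
        + v • ((2⁻¹ : ℂ) • (sigma3 * Q - Q * sigma3) * D)
        + v ^ 2 • (P * (Umat u * sigmaM) * D))
      = (v / 2) • (Q * D * sigma3 - sigma3 * (Q * D))
        + (lam ^ 2)⁻¹ • (sigmaP * (Q * D) - Q * D * sigmaP) := by
  intro D Q
  have hQ : Q * sigmaP * D + v • (Q * sigma3 * D)
      = P * (sigmaP * Lmat v) * D + v ^ 2 • (P * (Umat u * sigmaM) * D) := by
    have := congrArg (fun X => P * X * D) (Umat_mul_Lmat_mul_sigmaP_add u v)
    simpa only [Q, mul_add, add_mul, mul_smul_comm, smul_mul_assoc, mul_assoc] using this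
  have h3 : Q * D * sigma3 = Q * sigma3 * D := by
    rw [mul_assoc, diag_mul_sigma3, ← mul_assoc]
  have hP : (lam ^ 2)⁻¹ • (Q * D * sigmaP) = Q * sigmaP * D := by
    rw [mul_assoc, ← mul_smul_comm, inv_sq_smul_diag_mul_sigmaP, ← mul_assoc]
  clear_value Q
  rw [h3, smul_sub (lam ^ 2)⁻¹, hP, ← mul_assoc sigma3, ← mul_assoc sigmaP, smul_mul_assoc,
    sub_mul]
  linear_combination (norm := module) hQ

end Unipotent

section StokesProduct

variable (K : ℕ)

def stokesFactor (i : Fin (K+1)) (t : Fin (2*K+2) → ℂ) : Matrix (Fin 2) (Fin 2) ℂ :=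
  Umat (t ⟨2*(i:ℕ), by have := i.isLt; omega⟩)
    * Lmat (t ⟨2*(i:ℕ)+1, by have := i.isLt; omega⟩)

def stokesProd (t : Fin (2*K+2) → ℂ) : Matrix (Fin 2) (Fin 2) ℂ :=
  (List.ofFn fun i => stokesFactor K i t).prod

def stokesProdInit (t : Fin (2*K+2) → ℂ) : Matrix (Fin 2) (Fin 2) ℂ :=
  (List.ofFn fun i : Fin K => stokesFactor K i.castSucc t).prod

theorem Fmat_eq_stokesProd_mul (s : Fin (2*K+2) → ℂ) (lam : ℂ) :
    Fmat K s lam = stokesProd K s * !![lam, 0; 0, lam⁻¹] := rfl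

theorem stokesProd_eq_stokesProdInit_mul (t : Fin (2*K+2) → ℂ) :
    stokesProd K t
      = stokesProdInit K t
        * (Umat (t ⟨2*K, by omega⟩) * Lmat (t ⟨2*K+1, Nat.lt_succ_self _⟩)) := by
  rw [stokesProd, List.ofFn_succ', List.prod_concat]
  rfl

theorem differentiable_stokesFactor (i : Fin (K+1)) : Differentiable ℂ (stokesFactor K i) :=
  differentiable_Umat_mul_Lmat _ _

theorem differentiable_stokesProd : Differentiable ℂ (stokesProd K) := fun t =>
  differentiableAt_ofFn_prod fun i => differentiable_stokesFactor K i t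

theorem fderiv_stokesFactor_apply (i : Fin (K+1)) (t v : Fin (2*K+2) → ℂ) :
    fderiv ℂ (stokesFactor K i) t v
      = v ⟨2*(i:ℕ), by omega⟩ • (sigmaP * Lmat (t ⟨2*(i:ℕ)+1, by omega⟩))
        + v ⟨2*(i:ℕ)+1, by omega⟩ • (Umat (t ⟨2*(i:ℕ), by omega⟩) * sigmaM) :=
  fderiv_Umat_mul_Lmat_apply _ _ t v

theorem sum_neg_one_pow_smul_fderiv_stokesProd (t : Fin (2*K+2) → ℂ) :
    ∑ j : Fin (2*K+2),
        ((-1 : ℂ) ^ (j:ℕ) * t j) • fderiv ℂ (stokesProd K) t (Pi.single j 1)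
      = (2⁻¹ : ℂ) • (sigma3 * stokesProd K t - stokesProd K t * sigma3) := by
  have hv : ∑ j : Fin (2*K+2), ((-1 : ℂ) ^ (j:ℕ) * t j) • Pi.single (M := fun _ => ℂ) j 1
      = fun j : Fin (2*K+2) => (-1 : ℂ) ^ (j:ℕ) * t j := by
    ext j; simp [Pi.single_apply]
  simp_rw [← map_smul, ← map_sum, hv]
  refine (fderiv_ofFn_prod_apply_of_commutator (fun i => differentiable_stokesFactor K i t)
    ((2⁻¹ : ℂ) • sigma3) fun i => ?_).trans ?_
  · rw [fderiv_stokesFactor_apply, smul_mul_assoc, mul_smul_comm, ← smul_sub, stokesFactor,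
      commutator_half_sigma3_Umat_mul_Lmat]
    simp [pow_succ, pow_mul, sub_eq_add_neg]
  · rw [smul_sub, smul_mul_assoc, mul_smul_comm]
    rfl

theorem fderiv_stokesProd_single_zero (t : Fin (2*K+2) → ℂ) :
    fderiv ℂ (stokesProd K) t (Pi.single ⟨0, by omega⟩ 1) = sigmaP * stokesProd K t := by
  have htail : fderiv ℂ (fun y => (List.ofFn fun i : Fin K => stokesFactor K i.succ y).prod) t
      (Pi.single ⟨0, by omega⟩ 1) = 0 :=
    fderiv_ofFn_prod_apply_eq_zero (fun i => differentiable_stokesFactor K _ t) fun i =>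
      (fderiv_stokesFactor_apply K _ t _).trans (by simp [Fin.ext_iff])
  have hsplit : stokesProd K = fun y =>
      stokesFactor K 0 y * (List.ofFn fun i : Fin K => stokesFactor K i.succ y).prod := by
    ext1 y; rw [stokesProd, List.ofFn_succ, List.prod_cons]
  rw [hsplit]
  refine (fderiv_matrix_mul_apply (differentiable_stokesFactor K 0 t)
    (differentiableAt_ofFn_prod fun i => differentiable_stokesFactor K _ t) _).trans ?_
  rw [htail, fderiv_stokesFactor_apply]
  simp [stokesFactor, ← mul_assoc, sigmaP_mul_Umat]

theorem fderiv_stokesProd_apply_eq_stokesProdInit_mul (t v : Fin (2*K+2) → ℂ)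
    (hv : ∀ j : Fin (2*K+2), (j:ℕ) < 2*K → v j = 0) :
    fderiv ℂ (stokesProd K) t v = stokesProdInit K t
      * fderiv ℂ
          (fun y => Umat (y ⟨2*K, by omega⟩) * Lmat (y ⟨2*K+1, Nat.lt_succ_self _⟩))
          t v := by
  have hinit : fderiv ℂ (fun y => (List.ofFn fun i : Fin K => stokesFactor K i.castSucc y).prod)
      t v = 0 :=
    fderiv_ofFn_prod_apply_eq_zero (fun i => differentiable_stokesFactor K _ t) fun i =>
      (fderiv_stokesFactor_apply K _ t v).trans (by
        rw [hv _ (by dsimp; omega), hv _ (by dsimp; omega), zero_smul, zero_smul, add_zero])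
  rw [funext (stokesProd_eq_stokesProdInit_mul K)]
  refine (fderiv_matrix_mul_apply
    (differentiableAt_ofFn_prod fun i => differentiable_stokesFactor K _ t)
    (differentiable_Umat_mul_Lmat _ _ t) v).trans ?_
  rw [hinit, zero_mul, zero_add]
  rfl

end StokesProduct

section Bracket

variable {K : ℕ}

theorem pS_coord (c j : Fin (2*K+2)) (s : Fin (2*K+2) → ℂ) (lam : ℂ) :
    pS K j (fun t _ => t c) s lam = if c = j then 1 else 0 := by
  rw [pS, (hasFDerivAt_apply (𝕜 := ℂ) c s).fderiv]
  simp [Pi.single_apply]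

theorem pL_coord (c : Fin (2*K+2)) (s : Fin (2*K+2) → ℂ) (lam : ℂ) :
    pL K (fun t _ => t c) s lam = 0 :=
  deriv_const lam (s c)

theorem fnBr_coord (c : Fin (2*K+2)) (g : (Fin (2*K+2) → ℂ) → ℂ → ℂ)
    (s : Fin (2*K+2) → ℂ) (lam : ℂ) :
    fnBr K (fun t _ => t c) g s lam
      = ∑ l : Fin (2*K+2), (if (c:ℕ) < l then cSS K c l s lam * pS K l g s lam else 0)
        - ∑ j : Fin (2*K+2), (if (j:ℕ) < c then cSS K j c s lam * pS K j g s lam else 0)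
        + cSL K c s lam * pL K g s lam := by
  have hterm : ∀ j l : Fin (2*K+2),
      (if (j:ℕ) < l then cSS K j l s lam * (pS K j (fun t _ => t c) s lam * pS K l g s lam
        - pS K l (fun t _ => t c) s lam * pS K j g s lam) else 0)
      = (if c = j then (if (c:ℕ) < l then cSS K c l s lam * pS K l g s lam else 0) else 0)
        - (if c = l then (if (j:ℕ) < c then cSS K j c s lam * pS K j g s lam else 0) else 0) := by
    intro j l
    simp only [pS_coord]
    by_cases hj : c = j <;> by_cases hl : c = l <;> subst_vars <;> split_ifs <;> simp_all
  rw [fnBr, Finset.sum_congr rfl fun j _ => Finset.sum_congr rfl fun l _ => hterm j l]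
  simp only [Finset.sum_sub_distrib, pL_coord]
  rw [Finset.sum_comm (f := fun j l => if c = l then _ else _)]
  simp [pS_coord]

theorem fnBr_coord_last (g : (Fin (2*K+2) → ℂ) → ℂ → ℂ) (s : Fin (2*K+2) → ℂ)
    (lam : ℂ) :
    fnBr K (fun t _ => t ⟨2*K+1, Nat.lt_succ_self _⟩) g s lam
      = s ⟨2*K+1, Nat.lt_succ_self _⟩ * (lam * pL K g s lam)
        - ∑ j : Fin (2*K+2),
            (if (j:ℕ) < 2*K+1 then cSS K j ⟨2*K+1, Nat.lt_succ_self _⟩ s lam * pS K j g s lam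
              else 0) := by
  have hmax : ∀ l : Fin (2*K+2), ¬ 2*K+1 < (l:ℕ) := fun l => by omega
  have hsign : (-1 : ℂ) ^ (2*K+1+1) = 1 := Even.neg_one_pow ⟨K+1, by ring⟩
  simp [fnBr_coord, hmax, cSL, hsign]
  ring

theorem sum_ite_cSS_last_mul (s : Fin (2*K+2) → ℂ) (lam : ℂ) (d : Fin (2*K+2) → ℂ) :
    ∑ j : Fin (2*K+2),
        (if (j:ℕ) < 2*K+1 then cSS K j ⟨2*K+1, Nat.lt_succ_self _⟩ s lam * d j else 0)
      = d ⟨2*K, by omega⟩ - (lam^2)⁻¹ * d ⟨0, by omega⟩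
        + s ⟨2*K+1, Nat.lt_succ_self _⟩ * ∑ j : Fin (2*K+2), (-1 : ℂ) ^ (j:ℕ) * s j * d j
        + s ⟨2*K+1, Nat.lt_succ_self _⟩ ^ 2 * d ⟨2*K+1, Nat.lt_succ_self _⟩ := by
  have hterm : ∀ j : Fin (2*K+2),
      (if (j:ℕ) < 2*K+1 then cSS K j ⟨2*K+1, Nat.lt_succ_self _⟩ s lam * d j else 0)
      = (if j = ⟨2*K, by omega⟩ then d j else 0)
        - (if j = ⟨0, by omega⟩ then (lam^2)⁻¹ * d j else 0)
        + s ⟨2*K+1, Nat.lt_succ_self _⟩ * ((-1 : ℂ) ^ (j:ℕ) * s j * d j)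
        - (if j = ⟨2*K+1, Nat.lt_succ_self _⟩ then
            s ⟨2*K+1, Nat.lt_succ_self _⟩ * ((-1 : ℂ) ^ (j:ℕ) * s j * d j) else 0) := by
    intro j
    have hsign : (-1 : ℂ) ^ ((j:ℕ) + (2*K+1) + 1) = (-1) ^ (j:ℕ) := by
      rw [show (j:ℕ) + (2*K+1) + 1 = j + 2*(K+1) by ring, pow_add, pow_mul]
      simp
    by_cases hj : (j:ℕ) < 2*K+1
    · simp only [cSS, hj, if_true, hsign, Fin.ext_iff, and_true]
      split_ifs <;> first | omega | ring
    · have hj' : (j:ℕ) = 2*K+1 := by omega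
      simp [hj', Fin.ext_iff]
  have hlast : (-1 : ℂ) ^ (2*K+1) = -1 := Odd.neg_one_pow ⟨K, rfl⟩
  simp only [Finset.sum_congr rfl fun j _ => hterm j, Finset.sum_add_distrib,
    Finset.sum_sub_distrib, Finset.sum_ite_eq', Finset.mem_univ, if_true, ← Finset.mul_sum, hlast]
  ring

theorem pS_Fmat (j : Fin (2*K+2)) (s : Fin (2*K+2) → ℂ) (lam : ℂ) (a b : Fin 2) :
    pS K j (fun t l => Fmat K t l a b) s lam
      = (fderiv ℂ (stokesProd K) s (Pi.single j 1) * !![lam, 0; 0, lam⁻¹]) a b :=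
  fderiv_mul_const_apply_apply (differentiable_stokesProd K s) _ a b _

theorem lam_mul_pL_Fmat (s : Fin (2*K+2) → ℂ) (lam : ℂ) (a b : Fin 2) :
    lam * pL K (fun t l => Fmat K t l a b) s lam = (Fmat K s lam * sigma3) a b :=
  lam_mul_deriv_mul_diag _ a b lam

theorem sum_neg_one_pow_mul_pS_Fmat (s : Fin (2*K+2) → ℂ) (lam : ℂ) (a b : Fin 2) :
    ∑ j : Fin (2*K+2), (-1 : ℂ) ^ (j:ℕ) * s j * pS K j (fun t l => Fmat K t l a b) s lam
      = ((2⁻¹ : ℂ) • (sigma3 * stokesProd K s - stokesProd K s * sigma3)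
          * !![lam, 0; 0, lam⁻¹]) a b := by
  rw [← sum_neg_one_pow_smul_fderiv_stokesProd]
  simp [pS_Fmat, Finset.sum_mul, Matrix.sum_apply]

theorem pS_Fmat_zero (s : Fin (2*K+2) → ℂ) (lam : ℂ) (a b : Fin 2) :
    pS K ⟨0, by omega⟩ (fun t l => Fmat K t l a b) s lam
      = (sigmaP * stokesProd K s * !![lam, 0; 0, lam⁻¹]) a b := by
  rw [pS_Fmat, fderiv_stokesProd_single_zero]

theorem pS_Fmat_of_two_mul_le (j : Fin (2*K+2)) (hj : 2*K ≤ (j:ℕ)) (s : Fin (2*K+2) → ℂ)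
    (lam : ℂ) (a b : Fin 2) :
    pS K j (fun t l => Fmat K t l a b) s lam
      = (stokesProdInit K s
          * fderiv ℂ
              (fun y => Umat (y ⟨2*K, by omega⟩) * Lmat (y ⟨2*K+1, Nat.lt_succ_self _⟩))
              s (Pi.single j 1)
          * !![lam, 0; 0, lam⁻¹]) a b := by
  rw [pS_Fmat, fderiv_stokesProd_apply_eq_stokesProdInit_mul]
  intro i hi
  simp [Pi.single_apply, Fin.ext_iff]
  omega

theorem pS_Fmat_twoK (s : Fin (2*K+2) → ℂ) (lam : ℂ) (a b : Fin 2) :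
    pS K ⟨2*K, by omega⟩ (fun t l => Fmat K t l a b) s lam
      = (stokesProdInit K s * (sigmaP * Lmat (s ⟨2*K+1, Nat.lt_succ_self _⟩))
          * !![lam, 0; 0, lam⁻¹]) a b := by
  rw [pS_Fmat_of_two_mul_le _ le_rfl, fderiv_Umat_mul_Lmat_apply]
  simp [Fin.ext_iff]

theorem pS_Fmat_last (s : Fin (2*K+2) → ℂ) (lam : ℂ) (a b : Fin 2) :
    pS K ⟨2*K+1, Nat.lt_succ_self _⟩ (fun t l => Fmat K t l a b) s lam
      = (stokesProdInit K s * (Umat (s ⟨2*K, by omega⟩) * sigmaM)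
          * !![lam, 0; 0, lam⁻¹]) a b := by
  rw [pS_Fmat_of_two_mul_le _ (by simp), fderiv_Umat_mul_Lmat_apply]
  simp [Fin.ext_iff]

end Bracket

/-- `{s_{2K+2}, F}_{FN} = (s_{2K+2}/2)[F, σ3] + λ^{−2}[σ₊, F]`, entrywise,
identically on `ℂ^{2K+2} × ℂ*`. -/
theorem fn_bracket_sLast_F (K : ℕ) (s : Fin (2*K+2) → ℂ) (lam : ℂ)
    (a b : Fin 2) :
    fnBr K (fun t _ => t ⟨2*K+1, by omega⟩) (fun t l => Fmat K t l a b) s lam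
      = ((s ⟨2*K+1, by omega⟩ / 2) • (Fmat K s lam * sigma3 - sigma3 * Fmat K s lam)
          + (lam^2)⁻¹ • (sigmaP * Fmat K s lam - Fmat K s lam * sigmaP)) a b := by
  rw [fnBr_coord_last, lam_mul_pL_Fmat s lam, sum_ite_cSS_last_mul, sum_neg_one_pow_mul_pS_Fmat,
    pS_Fmat_zero, pS_Fmat_twoK, pS_Fmat_last, Fmat_eq_stokesProd_mul,
    stokesProd_eq_stokesProdInit_mul]
  have h := congrArg (· a b)
    (sLast_bracket_matrix_identity (stokesProdInit K s) (s ⟨2*K, by omega⟩)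
      (s ⟨2*K+1, by omega⟩) lam)
  simp only [Matrix.sub_apply, Matrix.add_apply, Matrix.smul_apply, smul_eq_mul] at h ⊢
  linear_combination h
end
end

section
/- For every integer K ≥ 1, let Ω_K be the 2K × 2K skew-symmetric matrix with entries Ω_{ij} = 4 if i is odd, j is even and i < j; Ω_{ij} = −4 if i is even, j is odd and j < i; and Ω_{ij} = 0 otherwise. Let P_K be the 2K × 2K tridiagonal matrix with (P_K)_{i,i+1} = 1/4, (P_K)_{i+1,i} = −1/4 and all other entries 0. Then Ω_K · P_K = −1 (minus the identity matrix); equivalently, P_K equals the inverse transpose of Ω_K. -/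
noncomputable section

open Matrix

/-- The coefficient matrix `Ω_K` of the Stokes two-form `W_K` in the logarithmic
coordinates: with 1-based indices, `Ω_{ij} = 4` if `i` is odd, `j` is even and `i < j`,
`Ω_{ij} = −4` if `i` is even, `j` is odd and `j < i`, and `Ω_{ij} = 0` otherwise.
(Here `i j : Fin (2K)` are 0-based, so the 1-based index is `(i:ℕ)+1`.) -/
def OmegaK (K : ℕ) : Matrix (Fin (2*K)) (Fin (2*K)) ℂ :=
  Matrix.of fun i j =>
    if ((i:ℕ)+1) % 2 = 1 ∧ ((j:ℕ)+1) % 2 = 0 ∧ (i:ℕ) < (j:ℕ) then 4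
    else if ((i:ℕ)+1) % 2 = 0 ∧ ((j:ℕ)+1) % 2 = 1 ∧ (j:ℕ) < (i:ℕ) then -4
    else 0

/-- The tridiagonal Poisson matrix `P_K`, with `(P_K)_{i,i+1} = 1/4`,
`(P_K)_{i+1,i} = −1/4` and all other entries `0`. -/
def PK (K : ℕ) : Matrix (Fin (2*K)) (Fin (2*K)) ℂ :=
  Matrix.of fun i j =>
    if (i:ℕ)+1 = (j:ℕ) then 1/4
    else if (j:ℕ)+1 = (i:ℕ) then -1/4
    else 0

lemma omega_mul_P_aux (K : ℕ) : OmegaK K * PK K = -1 := by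
  ext i j
  rw [Matrix.mul_apply, Matrix.neg_apply, Matrix.one_apply]
  have hsplit : ∀ k : Fin (2*K), OmegaK K i k * PK K k j =
      (if (k:ℕ)+1 = (j:ℕ) then OmegaK K i k * (1/4 : ℂ) else 0) +
      (if (j:ℕ)+1 = (k:ℕ) then OmegaK K i k * (-1/4 : ℂ) else 0) := by
    intro k
    simp only [PK, Matrix.of_apply]
    split_ifs <;> first | (exfalso; omega) | ring
  rw [Finset.sum_congr rfl fun k _ => hsplit k, Finset.sum_add_distrib]
  have hA : (∑ k : Fin (2*K), if (k:ℕ)+1 = (j:ℕ) then OmegaK K i k * (1/4 : ℂ) else 0)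
      = if h : 1 ≤ (j:ℕ) then OmegaK K i ⟨(j:ℕ)-1, by omega⟩ * (1/4 : ℂ) else 0 := by
    split_ifs with h
    · rw [Finset.sum_eq_single_of_mem
        (f := fun k : Fin (2*K) => if (k:ℕ)+1 = (j:ℕ) then OmegaK K i k * (1/4 : ℂ) else 0)
        (⟨(j:ℕ)-1, by omega⟩ : Fin (2*K)) (Finset.mem_univ _)
        (by intro k _ hk
            exact if_neg fun hc => hk (Fin.ext (by simp only [Fin.val_mk]; omega)))]
      rw [if_pos (by simp only [Fin.val_mk]; omega)]
    · apply Finset.sum_eq_zero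
      intro k _
      rw [if_neg (by omega)]
  have hB : (∑ k : Fin (2*K), if (j:ℕ)+1 = (k:ℕ) then OmegaK K i k * (-1/4 : ℂ) else 0)
      = if h : (j:ℕ)+1 < 2*K then OmegaK K i ⟨(j:ℕ)+1, h⟩ * (-1/4 : ℂ) else 0 := by
    split_ifs with h
    · rw [Finset.sum_eq_single_of_mem
        (f := fun k : Fin (2*K) => if (j:ℕ)+1 = (k:ℕ) then OmegaK K i k * (-1/4 : ℂ) else 0)
        (⟨(j:ℕ)+1, h⟩ : Fin (2*K)) (Finset.mem_univ _)
        (by intro k _ hk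
            exact if_neg fun hc => hk (Fin.ext (by simp only [Fin.val_mk]; omega)))]
      rw [if_pos (by simp only [Fin.val_mk])]
    · apply Finset.sum_eq_zero
      intro k _
      rw [if_neg (by omega)]
  rw [hA, hB]
  have hi := i.isLt
  have hj := j.isLt
  by_cases hij : (i:ℕ) = (j:ℕ)
  · rw [if_pos (Fin.ext hij)]
    simp only [OmegaK, Matrix.of_apply, Fin.val_mk]
    split_ifs <;> first | (exfalso; omega) | norm_num
  · rw [if_neg fun h => hij (congrArg Fin.val h)]
    simp only [OmegaK, Matrix.of_apply, Fin.val_mk]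
    split_ifs <;> first | (exfalso; omega) | norm_num

/-- `Ω_K · P_K = −𝟙`; equivalently, `P_K` is the inverse transpose of `Ω_K`. -/
theorem omega_mul_P_eq_neg_one (K : ℕ) (hK : 1 ≤ K) :
    OmegaK K * PK K = -1 ∧ PK K = ((OmegaK K)ᵀ)⁻¹ := by
  have h1 := omega_mul_P_aux K
  refine ⟨h1, ?_⟩
  have hsk : (OmegaK K)ᵀ = -(OmegaK K) := by
    ext i j
    simp only [Matrix.transpose_apply, Matrix.neg_apply, OmegaK, Matrix.of_apply]
    split_ifs <;> first | (exfalso; omega) | norm_num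
  have h2 : (OmegaK K)ᵀ * PK K = 1 := by
    rw [hsk, Matrix.neg_mul, h1]; simp
  exact (Matrix.inv_eq_right_inv h2).symm
end
end
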